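/- arXiv:1311.1756 — 8 statements merged into one kernel-verified Lean document; each statement's English description precedes it below -/
import Mathlib

section
/- Let f : ℝⁿ → ℝ ∪ {+∞} be standard self-concordant on its open convex effective domain dom f with ∇²f(x) positive definite for every x ∈ dom f, let g : ℝⁿ → ℝ ∪ {+∞} be proper, lower semicontinuous and convex, and let t > 0. If x*_t ∈ dom f ∩ dom g is a minimizer over ℝⁿ of F(x;t) := f(x) + t⁻¹g(x), then for every x ∈ dom f ∩ dom g one has ω(‖x − x*_t‖_{x*_t}) ≤ F(x;t) − F(x*_t;t). -/
open RealInnerProductSpace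

/-- The local norm `‖u‖_x = (uᵀ ∇²f(x) u)^(1/2)`, where `H` stands for the Hessian `∇²f(x)`. -/
noncomputable def locNorm {n : ℕ}
    (H : EuclideanSpace ℝ (Fin n) →L[ℝ] EuclideanSpace ℝ (Fin n))
    (u : EuclideanSpace ℝ (Fin n)) : ℝ :=
  Real.sqrt ⟪u, H u⟫

/-- `f` is standard self-concordant on `s`: along every line, `|φ'''(τ)| ≤ 2 φ''(τ)^(3/2)`. -/
def StandardSelfConcordantOn {n : ℕ} (f : EuclideanSpace ℝ (Fin n) → ℝ)
    (s : Set (EuclideanSpace ℝ (Fin n))) : Prop :=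
  ∀ x ∈ s, ∀ v : EuclideanSpace ℝ (Fin n), ∀ τ : ℝ, x + τ • v ∈ s →
    |iteratedDeriv 3 (fun r : ℝ => f (x + r • v)) τ| ≤
      2 * (iteratedDeriv 2 (fun r : ℝ => f (x + r • v)) τ) ^ ((3 : ℝ) / 2)

/-!
Restrict `f` to the segment `φ(τ) = f(x* + τ(x - x*))`. Standard self-concordance says
`(φ''^{-1/2})' ≥ -1`, so with `r = ‖x - x*‖_{x*} = φ''(0)^{1/2}` one gets
`φ''(τ) ≥ r² / (1 + τr)²`, and integrating twice over `[0, 1]` gives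
`φ(1) - φ(0) - φ'(0) ≥ r - ln(1 + r) = ω(r)`. Minimality of `x*` along the segment together
with convexity of `g` gives the first-order condition `φ'(0) ≥ t⁻¹(g(x*) - g(x))`, and adding the
two inequalities yields the claim.
-/

open Set Filter Topology

lemma monotoneOn_Icc_of_hasDerivAt_nonneg {B b : ℝ → ℝ} {a c : ℝ}
    (hB : ∀ τ ∈ Icc a c, HasDerivAt B (b τ) τ) (hb : ∀ τ ∈ Icc a c, 0 ≤ b τ) :
    MonotoneOn B (Icc a c) :=
  monotoneOn_of_hasDerivWithinAt_nonneg (convex_Icc a c)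
    (fun τ hτ => (hB τ hτ).continuousAt.continuousWithinAt)
    (fun τ hτ => (hB τ (interior_subset hτ)).hasDerivWithinAt)
    (fun τ hτ => hb τ (interior_subset hτ))

lemma HasDerivAt.le_of_eventually_mul_sub_le {φ : ℝ → ℝ} {a c d : ℝ}
    (hφ : HasDerivAt φ d a) (h : ∀ᶠ τ in 𝓝[>] a, c * (τ - a) ≤ φ τ - φ a) : c ≤ d := by
  refine ge_of_tendsto (hasDerivAt_iff_tendsto_slope_left_right.1 hφ).2 ?_
  filter_upwards [h, self_mem_nhdsWithin] with τ hτ (hpos : a < τ)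
  rwa [slope_def_field, le_div_iff₀ (sub_pos.2 hpos)]

section ScalarSelfConcordance

variable {φ p h q : ℝ → ℝ} {r T : ℝ}

lemma sq_div_le_of_abs_deriv_le (hr : 0 < r)
    (hh : ∀ τ ∈ Icc 0 T, HasDerivAt h (q τ) τ) (hpos : ∀ τ ∈ Icc 0 T, 0 < h τ)
    (hq : ∀ τ ∈ Icc 0 T, |q τ| ≤ 2 * h τ ^ ((3 : ℝ) / 2)) (h0 : h 0 = r ^ 2) :
    ∀ τ ∈ Icc 0 T, (r / (1 + τ * r)) ^ 2 ≤ h τ := by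
  set s := fun τ => √(h τ)
  have hs : ∀ τ ∈ Icc 0 T, 0 < s τ := fun τ hτ => Real.sqrt_pos.2 (hpos τ hτ)
  have hB : ∀ τ ∈ Icc 0 T, HasDerivAt (fun y => y - (s y)⁻¹) (1 + q τ / (2 * s τ ^ 3)) τ := by
    intro τ hτ
    have hsqrt := (Real.hasDerivAt_sqrt (hpos τ hτ).ne').comp τ (hh τ hτ)
    refine ((hasDerivAt_id' τ).sub (hsqrt.inv (hs τ hτ).ne')).congr_deriv ?_
    simp only [Function.comp_apply, s]
    field_simp
    ring
  have hb : ∀ τ ∈ Icc 0 T, 0 ≤ 1 + q τ / (2 * s τ ^ 3) := by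
    intro τ hτ
    have hs3 : h τ ^ ((3 : ℝ) / 2) = s τ ^ 3 := by
      rw [show s τ = √(h τ) from rfl, Real.sqrt_eq_rpow, ← Real.rpow_natCast,
        ← Real.rpow_mul (hpos τ hτ).le]
      norm_num
    have hqτ := (abs_le.1 ((hq τ hτ).trans_eq (by rw [hs3]))).1
    have : -1 ≤ q τ / (2 * s τ ^ 3) := by
      rw [le_div_iff₀ (by have := hs τ hτ; positivity)]
      linarith
    linarith
  intro τ hτ
  have hmono := monotoneOn_Icc_of_hasDerivAt_nonneg hB hb
    (left_mem_Icc.2 (hτ.1.trans hτ.2)) hτ hτ.1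
  have hs0 : s 0 = r := by simp only [s, h0, Real.sqrt_sq hr.le]
  simp only [hs0, zero_sub] at hmono
  have hdiv : r / (1 + τ * r) ≤ s τ := by
    rw [← inv_le_inv₀ (hs τ hτ) (by have := hτ.1; positivity), inv_div, add_div,
      mul_div_cancel_right₀ _ hr.ne', one_div]
    linarith
  calc (r / (1 + τ * r)) ^ 2 ≤ s τ ^ 2 :=
        pow_le_pow_left₀ (by have := hτ.1; positivity) hdiv 2
    _ = h τ := Real.sq_sqrt (hpos τ hτ).le

lemma hasDerivAt_one_add_mul_inv {r τ : ℝ} (hτ : 1 + τ * r ≠ 0) :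
    HasDerivAt (fun y => (1 + y * r)⁻¹) (-r / (1 + τ * r) ^ 2) τ :=
  ((((hasDerivAt_id' τ).mul_const r).const_add 1).inv hτ).congr_deriv (by ring)

lemma sub_div_le_sub_of_abs_deriv_le (hr : 0 < r)
    (hp : ∀ τ ∈ Icc 0 T, HasDerivAt p (h τ) τ) (hh : ∀ τ ∈ Icc 0 T, HasDerivAt h (q τ) τ)
    (hpos : ∀ τ ∈ Icc 0 T, 0 < h τ) (hq : ∀ τ ∈ Icc 0 T, |q τ| ≤ 2 * h τ ^ ((3 : ℝ) / 2))
    (h0 : h 0 = r ^ 2) :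
    ∀ τ ∈ Icc 0 T, r - r / (1 + τ * r) ≤ p τ - p 0 := by
  have h1 : ∀ τ ∈ Icc 0 T, 0 < 1 + τ * r := fun τ hτ => by nlinarith [hτ.1]
  have hB : ∀ τ ∈ Icc 0 T, HasDerivAt (fun y => p y + r * (1 + y * r)⁻¹)
      (h τ + r * (-r / (1 + τ * r) ^ 2)) τ := fun τ hτ =>
    (hp τ hτ).add ((hasDerivAt_one_add_mul_inv (h1 τ hτ).ne').const_mul r)
  have hb : ∀ τ ∈ Icc 0 T, 0 ≤ h τ + r * (-r / (1 + τ * r) ^ 2) := fun τ hτ => by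
    have := sq_div_le_of_abs_deriv_le hr hh hpos hq h0 τ hτ
    rw [div_pow] at this
    linarith [show r * (-r / (1 + τ * r) ^ 2) = -(r ^ 2 / (1 + τ * r) ^ 2) by ring]
  intro τ hτ
  have hmono := monotoneOn_Icc_of_hasDerivAt_nonneg hB hb
    (left_mem_Icc.2 (hτ.1.trans hτ.2)) hτ hτ.1
  simp only [zero_mul, add_zero, inv_one, mul_one] at hmono
  rw [div_eq_mul_inv]
  linarith

lemma sub_log_le_of_abs_deriv_le (hr : 0 < r) (hφ : ∀ τ ∈ Icc 0 T, HasDerivAt φ (p τ) τ)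
    (hp : ∀ τ ∈ Icc 0 T, HasDerivAt p (h τ) τ) (hh : ∀ τ ∈ Icc 0 T, HasDerivAt h (q τ) τ)
    (hpos : ∀ τ ∈ Icc 0 T, 0 < h τ) (hq : ∀ τ ∈ Icc 0 T, |q τ| ≤ 2 * h τ ^ ((3 : ℝ) / 2))
    (h0 : h 0 = r ^ 2) :
    ∀ τ ∈ Icc 0 T, τ * r - Real.log (1 + τ * r) ≤ φ τ - φ 0 - τ * p 0 := by
  have h1 : ∀ τ ∈ Icc 0 T, 0 < 1 + τ * r := fun τ hτ => by nlinarith [hτ.1]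
  have hB : ∀ τ ∈ Icc 0 T,
      HasDerivAt (fun y => φ y - y * p 0 - y * r + Real.log (1 + y * r))
        (p τ - p 0 - r + r / (1 + τ * r)) τ := by
    intro τ hτ
    have hlog := (((hasDerivAt_id' τ).mul_const r).const_add 1).log (h1 τ hτ).ne'
    exact ((((hφ τ hτ).sub ((hasDerivAt_id' τ).mul_const (p 0))).sub
      ((hasDerivAt_id' τ).mul_const r)).add hlog).congr_deriv (by ring)
  have hb : ∀ τ ∈ Icc 0 T, 0 ≤ p τ - p 0 - r + r / (1 + τ * r) := fun τ hτ => by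
    linarith [sub_div_le_sub_of_abs_deriv_le hr hp hh hpos hq h0 τ hτ]
  intro τ hτ
  have hmono := monotoneOn_Icc_of_hasDerivAt_nonneg hB hb
    (left_mem_Icc.2 (hτ.1.trans hτ.2)) hτ hτ.1
  simp only [zero_mul, sub_zero, add_zero, Real.log_one] at hmono
  linarith

end ScalarSelfConcordance

lemma hasDerivAt_add_smul {E : Type*} [NormedAddCommGroup E] [NormedSpace ℝ E]
    (x v : E) (τ : ℝ) : HasDerivAt (fun r : ℝ => x + r • v) v τ := by
  simpa using ((hasDerivAt_id τ).smul_const v).const_add x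

section Line

variable {E : Type*} [NormedAddCommGroup E] [InnerProductSpace ℝ E] [CompleteSpace E]
  {f : E → ℝ} {x v : E} {τ : ℝ}

lemma hasDerivAt_comp_add_smul (hf : DifferentiableAt ℝ f (x + τ • v)) :
    HasDerivAt (fun r : ℝ => f (x + r • v)) ⟪v, gradient f (x + τ • v)⟫ τ := by
  rw [real_inner_comm]
  exact hf.hasGradientAt.hasFDerivAt.comp_hasDerivAt τ (hasDerivAt_add_smul x v τ)

lemma hasDerivAt_inner_gradient_comp_add_smul {H : E →L[ℝ] E}
    (hH : HasFDerivAt (gradient f) H (x + τ • v)) :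
    HasDerivAt (fun r : ℝ => ⟪v, gradient f (x + r • v)⟫) ⟪v, H v⟫ τ := by
  have hgrad : HasDerivAt (fun r : ℝ => gradient f (x + r • v)) (H v) τ :=
    hH.comp_hasDerivAt (f := fun r : ℝ => x + r • v) τ (hasDerivAt_add_smul x v τ)
  exact (innerSL ℝ v).hasFDerivAt.comp_hasDerivAt τ hgrad

variable {s : Set E} {hess : E → E →L[ℝ] E}

lemma iteratedDeriv_two_comp_add_smul (hs : IsOpen s) (hf : DifferentiableOn ℝ f s)
    (hhess : ∀ y ∈ s, HasFDerivAt (gradient f) (hess y) y) (hτ : x + τ • v ∈ s) :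
    iteratedDeriv 2 (fun r : ℝ => f (x + r • v)) τ = ⟪v, hess (x + τ • v) v⟫ := by
  have hU : IsOpen {r : ℝ | x + r • v ∈ s} := hs.preimage (by fun_prop)
  have hderiv : deriv (fun r : ℝ => f (x + r • v)) =ᶠ[𝓝 τ]
      fun r => ⟪v, gradient f (x + r • v)⟫ :=
    eventually_of_mem (hU.mem_nhds hτ) fun r hr =>
      (hasDerivAt_comp_add_smul ((hf _ hr).differentiableAt (hs.mem_nhds hr))).deriv
  rw [iteratedDeriv_succ, iteratedDeriv_one, hderiv.deriv_eq]
  exact (hasDerivAt_inner_gradient_comp_add_smul (hhess _ hτ)).deriv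

lemma hasDerivAt_inner_hess_comp_add_smul (hs : IsOpen s) (hf : ContDiffOn ℝ 3 f s)
    (hhess : ∀ y ∈ s, HasFDerivAt (gradient f) (hess y) y) (hτ : x + τ • v ∈ s) :
    HasDerivAt (fun r : ℝ => ⟪v, hess (x + r • v) v⟫)
      (iteratedDeriv 3 (fun r : ℝ => f (x + r • v)) τ) τ := by
  have hU : IsOpen {r : ℝ | x + r • v ∈ s} := hs.preimage (by fun_prop)
  have hφ : ContDiffAt ℝ 3 (fun r : ℝ => f (x + r • v)) τ :=
    (hf.contDiffAt (hs.mem_nhds hτ)).comp τ (by fun_prop)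
  have h2 : iteratedDeriv 2 (fun r : ℝ => f (x + r • v)) =ᶠ[𝓝 τ]
      fun r => ⟪v, hess (x + r • v) v⟫ :=
    eventually_of_mem (hU.mem_nhds hτ) fun r hr =>
      iteratedDeriv_two_comp_add_smul hs (hf.differentiableOn (by norm_num)) hhess hr
  have hdiff : DifferentiableAt ℝ (iteratedDeriv 2 (fun r : ℝ => f (x + r • v))) τ := by
    rw [iteratedDeriv_eq_equiv_comp]
    exact (ContinuousMultilinearMap.piFieldEquiv ℝ (Fin 2) ℝ).symm.differentiableAt.comp τ
      (hφ.differentiableAt_iteratedFDeriv (m := 2) (by norm_num))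
  rw [iteratedDeriv_succ]
  exact hdiff.hasDerivAt.congr_of_eventuallyEq h2.symm

end Line

lemma IsMinOn.mul_sub_le_sub_of_convexOn {E : Type*} [AddCommGroup E] [Module ℝ E]
    {f g : E → ℝ} {s D : Set E} {c : ℝ} {x y : E} (hc : 0 ≤ c) (hs : Convex ℝ s)
    (hg : ConvexOn ℝ D g) (hmin : IsMinOn (fun z => f z + c * g z) (s ∩ D) x)
    (hx : x ∈ s ∩ D) (hy : y ∈ s ∩ D) {τ : ℝ} (hτ : τ ∈ Icc (0 : ℝ) 1) :
    c * (g x - g y) * τ ≤ f (x + τ • (y - x)) - f x := by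
  have hmem : x + τ • (y - x) ∈ s ∩ D :=
    ⟨hs.add_smul_sub_mem hx.1 hy.1 hτ, hg.1.add_smul_sub_mem hx.2 hy.2 hτ⟩
  have hseg : x + τ • (y - x) = (1 - τ) • x + τ • y := by
    rw [smul_sub, sub_smul, one_smul]; abel
  have hgτ : g (x + τ • (y - x)) ≤ (1 - τ) * g x + τ * g y := by
    simpa only [hseg, smul_eq_mul] using
      hg.2 hx.2 hy.2 (sub_nonneg.2 hτ.2) hτ.1 (sub_add_cancel 1 τ)
  have := isMinOn_iff.1 hmin _ hmem
  nlinarith [mul_le_mul_of_nonneg_left hgτ hc]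

theorem stmt0_general {n : ℕ} (f g : EuclideanSpace ℝ (Fin n) → ℝ)
    (df dg : Set (EuclideanSpace ℝ (Fin n)))
    (hdf_open : IsOpen df) (hdf_conv : Convex ℝ df)
    (hf_smooth : ContDiffOn ℝ 3 f df)
    (hf_sc : StandardSelfConcordantOn f df)
    (hess : EuclideanSpace ℝ (Fin n) →
      EuclideanSpace ℝ (Fin n) →L[ℝ] EuclideanSpace ℝ (Fin n))
    (hhess : ∀ x ∈ df, HasFDerivAt (fun y => gradient f y) (hess x) x)
    (hpd : ∀ x ∈ df, ∀ u : EuclideanSpace ℝ (Fin n), u ≠ 0 → 0 < ⟪u, hess x u⟫)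
    (hg_cvx : ConvexOn ℝ dg g)
    (t : ℝ) (ht : 0 < t)
    (xs : EuclideanSpace ℝ (Fin n)) (hxs : xs ∈ df ∩ dg)
    (hmin : ∀ x ∈ df ∩ dg, f xs + t⁻¹ * g xs ≤ f x + t⁻¹ * g x) :
    ∀ x ∈ df ∩ dg,
      locNorm (hess xs) (x - xs) - Real.log (1 + locNorm (hess xs) (x - xs)) ≤
        (f x + t⁻¹ * g x) - (f xs + t⁻¹ * g xs) := by
  intro x hx
  by_cases hv : x - xs = 0
  · simpa [locNorm, hv] using hmin x hx
  have hf_diff : DifferentiableOn ℝ f df := hf_smooth.differentiableOn (by norm_num)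
  have hseg : ∀ τ ∈ Icc (0 : ℝ) 1, xs + τ • (x - xs) ∈ df := fun τ hτ =>
    hdf_conv.add_smul_sub_mem hxs.1 hx.1 hτ
  have hφ : ∀ τ ∈ Icc (0 : ℝ) 1, HasDerivAt (fun r : ℝ => f (xs + r • (x - xs)))
      ⟪x - xs, gradient f (xs + τ • (x - xs))⟫ τ := fun τ hτ =>
    hasDerivAt_comp_add_smul ((hf_diff _ (hseg τ hτ)).differentiableAt
      (hdf_open.mem_nhds (hseg τ hτ)))
  have hh0 : 0 < ⟪x - xs, hess xs (x - xs)⟫ := hpd xs hxs.1 _ hv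
  have hω := sub_log_le_of_abs_deriv_le (Real.sqrt_pos.2 hh0) hφ
    (fun τ hτ => hasDerivAt_inner_gradient_comp_add_smul (hhess _ (hseg τ hτ)))
    (fun τ hτ => hasDerivAt_inner_hess_comp_add_smul hdf_open hf_smooth hhess (hseg τ hτ))
    (fun τ hτ => hpd _ (hseg τ hτ) _ hv)
    (fun τ hτ => by
      simpa only [iteratedDeriv_two_comp_add_smul hdf_open hf_diff hhess (hseg τ hτ)]
        using hf_sc xs hxs.1 _ τ (hseg τ hτ))
    (by rw [zero_smul, add_zero, Real.sq_sqrt hh0.le]) 1 (right_mem_Icc.2 zero_le_one)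
  have hfirst : t⁻¹ * (g xs - g x) ≤ ⟪x - xs, gradient f xs⟫ := by
    have hφ0 := hφ 0 (left_mem_Icc.2 zero_le_one)
    rw [zero_smul, add_zero] at hφ0
    refine hφ0.le_of_eventually_mul_sub_le ?_
    filter_upwards [Ioo_mem_nhdsGT zero_lt_one] with τ hτ
    simpa using (isMinOn_iff.2 hmin).mul_sub_le_sub_of_convexOn (inv_pos.2 ht).le hdf_conv
      hg_cvx hxs hx (Ioo_subset_Icc_self hτ)
  simp only [one_smul, zero_smul, add_zero, one_mul, add_sub_cancel] at hω
  unfold locNorm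
  linarith

/-- for the minimizer `x*_t` of `F(·;t) = f + t⁻¹ g` one has
`ω(‖x − x*_t‖_{x*_t}) ≤ F(x;t) − F(x*_t;t)` for all `x ∈ dom f ∩ dom g`,
where `ω(τ) = τ − ln(1+τ)`. -/
theorem stmt0 {n : ℕ} (f g : EuclideanSpace ℝ (Fin n) → ℝ)
    (df dg : Set (EuclideanSpace ℝ (Fin n)))
    (hdf_open : IsOpen df) (hdf_conv : Convex ℝ df)
    (hf_smooth : ContDiffOn ℝ 3 f df)
    (hf_sc : StandardSelfConcordantOn f df)
    (hess : EuclideanSpace ℝ (Fin n) →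
      EuclideanSpace ℝ (Fin n) →L[ℝ] EuclideanSpace ℝ (Fin n))
    (hhess : ∀ x ∈ df, HasFDerivAt (fun y => gradient f y) (hess x) x)
    (hpd : ∀ x ∈ df, ∀ u : EuclideanSpace ℝ (Fin n), u ≠ 0 → 0 < ⟪u, hess x u⟫)
    (hg_cvx : ConvexOn ℝ dg g) (hg_lsc : LowerSemicontinuousOn g dg)
    (hg_proper : dg.Nonempty)
    (t : ℝ) (ht : 0 < t)
    (xs : EuclideanSpace ℝ (Fin n)) (hxs : xs ∈ df ∩ dg)
    (hmin : ∀ x ∈ df ∩ dg, f xs + t⁻¹ * g xs ≤ f x + t⁻¹ * g x) :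
    ∀ x ∈ df ∩ dg,
      locNorm (hess xs) (x - xs) - Real.log (1 + locNorm (hess xs) (x - xs)) ≤
        (f x + t⁻¹ * g x) - (f xs + t⁻¹ * g xs) :=
  stmt0_general f g df dg hdf_open hdf_conv hf_smooth hf_sc hess hhess hpd hg_cvx t ht xs hxs hmin
end

section
/- Let H be an n×n real symmetric positive definite matrix, t > 0, and g : ℝⁿ → ℝ ∪ {+∞} proper, lower semicontinuous and convex. For s ∈ ℝⁿ define ψ_s(y) := t⁻¹g(y) + ½yᵀHy − sᵀy. If u, v ∈ ℝⁿ and p, q ∈ ℝⁿ are minimizers over ℝⁿ of ψ_u and ψ_v respectively, then (p − q)ᵀ(u − v) ≥ (p − q)ᵀH(p − q) (co-coercivity of the scaled proximal operator P^g_x(·;t) with respect to the local norms). -/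
/-!
If `p` minimizes `f + ½ B(·,·)` over `s` with `f` convex, comparing with the points
`p + l (y - p)` of the segment and letting `l → 0⁺` gives the variational inequality
`f p ≤ f y + ½ (B p (y - p) + B (y - p) p)`.
Applied to `f = t⁻¹ g - ⟪u, ·⟫` at `p` with `y = q`, and to `f = t⁻¹ g - ⟪v, ·⟫` at `q` with
`y = p`, the sum of the two inequalities cancels `g` and the cross terms of `B` combine to
`-B (p - q) (p - q)`.
-/

open Matrix Filter Topology

namespace ConvexOn

variable {E : Type*} [AddCommGroup E] [Module ℝ E] {s : Set E} {f : E → ℝ} {p q y : E}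

theorem le_add_of_isMinOn_add_bilin (hf : ConvexOn ℝ s f) (B : LinearMap.BilinForm ℝ E)
    (hmin : IsMinOn (fun y => f y + B y y / 2) s p) (hp : p ∈ s) (hy : y ∈ s) :
    f p ≤ f y + (B p (y - p) + B (y - p) p) / 2 := by
  set d := y - p
  have step : ∀ l ∈ Set.Ioo (0 : ℝ) 1, f p ≤ f y + (B p d + B d p) / 2 + l * (B d d / 2) := by
    rintro l ⟨hl0, hl1⟩
    have hl1' : 0 ≤ 1 - l := by linarith
    have hz : (1 - l) • p + l • y = p + l • d := by simp only [d]; module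
    have hz_mem : p + l • d ∈ s := hz ▸ hf.1 hp hy hl1' hl0.le (by ring)
    have hconv : f (p + l • d) ≤ (1 - l) * f p + l * f y := hz ▸ hf.2 hp hy hl1' hl0.le (by ring)
    have hB : B (p + l • d) (p + l • d) = B p p + l * (B p d + B d p) + l ^ 2 * B d d := by
      simp only [map_add, map_smul, LinearMap.add_apply, LinearMap.smul_apply, smul_eq_mul]
      ring
    have hle := isMinOn_iff.1 hmin _ hz_mem
    simp only [hB] at hle
    have hscaled : l * f p ≤ l * (f y + (B p d + B d p) / 2 + l * (B d d / 2)) := by linarith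
    exact le_of_mul_le_mul_left hscaled hl0
  have hlim : Tendsto (fun l : ℝ => f y + (B p d + B d p) / 2 + l * (B d d / 2)) (𝓝[>] 0)
      (𝓝 (f y + (B p d + B d p) / 2)) := by
    have : Continuous (fun l : ℝ => f y + (B p d + B d p) / 2 + l * (B d d / 2)) := by fun_prop
    simpa using this.continuousWithinAt.tendsto (x := 0) (s := Set.Ioi 0)
  exact ge_of_tendsto hlim (eventually_of_mem (Ioo_mem_nhdsGT one_pos) step)

theorem bilin_sub_le_of_isMinOn (hf : ConvexOn ℝ s f) (B : LinearMap.BilinForm ℝ E)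
    (ℓ₁ ℓ₂ : E →ₗ[ℝ] ℝ) (hpmin : IsMinOn (fun y => f y - ℓ₁ y + B y y / 2) s p)
    (hqmin : IsMinOn (fun y => f y - ℓ₂ y + B y y / 2) s q) (hp : p ∈ s) (hq : q ∈ s) :
    B (p - q) (p - q) ≤ ℓ₁ (p - q) - ℓ₂ (p - q) := by
  have hp_ineq := (hf.sub (ℓ₁.concaveOn hf.1)).le_add_of_isMinOn_add_bilin B hpmin hp hq
  have hq_ineq := (hf.sub (ℓ₂.concaveOn hf.1)).le_add_of_isMinOn_add_bilin B hqmin hq hp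
  simp only [Pi.sub_apply, map_sub, LinearMap.sub_apply] at hp_ineq hq_ineq ⊢
  linarith

end ConvexOn

theorem stmt1_general {n : ℕ} (H : Matrix (Fin n) (Fin n) ℝ)
    (t : ℝ) (ht : 0 < t)
    (g : (Fin n → ℝ) → ℝ) (dg : Set (Fin n → ℝ))
    (hg_cvx : ConvexOn ℝ dg g)
    (u v p q : Fin n → ℝ)
    (hp_mem : p ∈ dg)
    (hp_min : ∀ y ∈ dg,
      t⁻¹ * g p + (1/2) * (p ⬝ᵥ H.mulVec p) - u ⬝ᵥ p ≤
        t⁻¹ * g y + (1/2) * (y ⬝ᵥ H.mulVec y) - u ⬝ᵥ y)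
    (hq_mem : q ∈ dg)
    (hq_min : ∀ y ∈ dg,
      t⁻¹ * g q + (1/2) * (q ⬝ᵥ H.mulVec q) - v ⬝ᵥ q ≤
        t⁻¹ * g y + (1/2) * (y ⬝ᵥ H.mulVec y) - v ⬝ᵥ y) :
    (p - q) ⬝ᵥ H.mulVec (p - q) ≤ (p - q) ⬝ᵥ (u - v) := by
  have hf : ConvexOn ℝ dg (fun y => t⁻¹ * g y) := hg_cvx.smul (inv_nonneg.2 ht.le)
  have hp_isMin : IsMinOn (fun y => t⁻¹ * g y - dotProductBilin ℝ ℝ u y + toBilin' H y y / 2)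
      dg p := fun y hy => by
    simp only [dotProductBilin_apply_apply, toBilin'_apply', Set.mem_ofPred_eq]
    linarith [hp_min y hy]
  have hq_isMin : IsMinOn (fun y => t⁻¹ * g y - dotProductBilin ℝ ℝ v y + toBilin' H y y / 2)
      dg q := fun y hy => by
    simp only [dotProductBilin_apply_apply, toBilin'_apply', Set.mem_ofPred_eq]
    linarith [hq_min y hy]
  have key := hf.bilin_sub_le_of_isMinOn (toBilin' H) _ _ hp_isMin hq_isMin hp_mem hq_mem
  simp only [toBilin'_apply', dotProductBilin_apply_apply] at key
  rwa [dotProduct_sub, dotProduct_comm (p - q) u, dotProduct_comm (p - q) v]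

/-- co-coercivity of the scaled proximal operator. If `p` and `q` minimize
`ψ_u(y) = t⁻¹ g(y) + ½ yᵀHy − uᵀy` and `ψ_v` respectively (`g` proper lsc convex, so the
minimization over `ℝⁿ` is minimization over `dom g`), then
`(p − q)ᵀ(u − v) ≥ (p − q)ᵀ H (p − q)`. -/
theorem stmt1 {n : ℕ} (H : Matrix (Fin n) (Fin n) ℝ)
    (hsymm : H.IsSymm) (hpd : H.PosDef)
    (t : ℝ) (ht : 0 < t)
    (g : (Fin n → ℝ) → ℝ) (dg : Set (Fin n → ℝ))
    (hg_cvx : ConvexOn ℝ dg g) (hg_lsc : LowerSemicontinuousOn g dg)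
    (hg_proper : dg.Nonempty)
    (u v p q : Fin n → ℝ)
    (hp_mem : p ∈ dg)
    (hp_min : ∀ y ∈ dg,
      t⁻¹ * g p + (1/2) * (p ⬝ᵥ H.mulVec p) - u ⬝ᵥ p ≤
        t⁻¹ * g y + (1/2) * (y ⬝ᵥ H.mulVec y) - u ⬝ᵥ y)
    (hq_mem : q ∈ dg)
    (hq_min : ∀ y ∈ dg,
      t⁻¹ * g q + (1/2) * (q ⬝ᵥ H.mulVec q) - v ⬝ᵥ q ≤
        t⁻¹ * g y + (1/2) * (y ⬝ᵥ H.mulVec y) - v ⬝ᵥ y) :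
    (p - q) ⬝ᵥ H.mulVec (p - q) ≤ (p - q) ⬝ᵥ (u - v) :=
  stmt1_general H t ht g dg hg_cvx u v p q hp_mem hp_min hq_mem hq_min
end

section
/- Let H be an n×n real symmetric positive definite matrix, t > 0, and g : ℝⁿ → ℝ ∪ {+∞} proper, lower semicontinuous and convex. For s ∈ ℝⁿ define ψ_s(y) := t⁻¹g(y) + ½yᵀHy − sᵀy. If u, v ∈ ℝⁿ and p, q ∈ ℝⁿ are minimizers over ℝⁿ of ψ_u and ψ_v respectively, then ((p − q)ᵀH(p − q))^(1/2) ≤ ((u − v)ᵀH⁻¹(u − v))^(1/2), i.e., the scaled proximal operator P^g_x(·;t) is nonexpansive from the dual local norm into the local norm. -/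
/-!
The minimizer `p` of `f + ½‖·‖²_H - ⟪u, ·⟫` over a convex set satisfies the variational inequality
`f p - ⟪u, p⟫ ≤ f y - ⟪u, y⟫ + ⟪Hp, y - p⟫` (compare the objective at `p` and at `p + l (y - p)`,
use convexity of `f`, and let `l → 0⁺`). Adding the inequalities for `(u, p)` and `(v, q)` gives
`‖p - q‖²_H ≤ ⟪u - v, p - q⟫`, and Cauchy–Schwarz for the pair of dual norms bounds the right-hand
side by `‖u - v‖_H* ‖p - q‖_H`.
-/

open Matrix Filter Topology

lemma le_of_forall_pos_le_add_mul {a b c : ℝ} (h : ∀ l : ℝ, 0 < l → l ≤ 1 → a ≤ b + l * c) :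
    a ≤ b := by
  have hlim : Tendsto (fun l : ℝ => b + l * c) (𝓝[>] 0) (𝓝 b) := by
    have : Continuous fun l : ℝ => b + l * c := by fun_prop
    simpa using (this.tendsto 0).mono_left nhdsWithin_le_nhds
  refine ge_of_tendsto hlim ?_
  filter_upwards [Ioc_mem_nhdsGT one_pos] with l hl using h l hl.1 hl.2

namespace LinearMap.BilinForm.IsSymm

variable {M : Type*} [AddCommGroup M] [Module ℝ M] {B : LinearMap.BilinForm ℝ M}
  {f : M → ℝ} {D : Set M}

lemma apply_add_smul_self (hB : B.IsSymm) (x d : M) (l : ℝ) :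
    B (x + l • d) (x + l • d) = B x x + 2 * l * B x d + l ^ 2 * B d d := by
  simp only [map_add, map_smul, LinearMap.add_apply, LinearMap.smul_apply, smul_eq_mul,
    hB.eq d x]
  ring

theorem le_add_apply_sub_of_isMinOn (hB : B.IsSymm) (hf : ConvexOn ℝ D f) {p y : M}
    (hp : p ∈ D) (hmin : IsMinOn (fun x => f x + (1 / 2) * B x x) D p) (hy : y ∈ D) :
    f p ≤ f y + B p (y - p) := by
  refine le_of_forall_pos_le_add_mul (c := (1 / 2) * B (y - p) (y - p)) fun l hl₀ hl₁ => ?_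
  have hz : p + l • (y - p) = (1 - l) • p + l • y := by module
  have hmin_z := isMinOn_iff.mp hmin _ (hf.1.add_smul_sub_mem hp hy ⟨hl₀.le, hl₁⟩)
  have hconv : f (p + l • (y - p)) ≤ (1 - l) * f p + l * f y := by
    rw [hz]
    exact hf.2 hp hy (by linarith) hl₀.le (by ring)
  rw [hB.apply_add_smul_self] at hmin_z
  have hscaled : l * f p ≤ l * (f y + B p (y - p) + l * ((1 / 2) * B (y - p) (y - p))) := by
    nlinarith
  exact le_of_mul_le_mul_left hscaled hl₀

theorem apply_sub_sub_le_of_isMinOn (hB : B.IsSymm) (hf : ConvexOn ℝ D f)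
    {φ ψ : M →ₗ[ℝ] ℝ} {p q : M}
    (hp : p ∈ D) (hp_min : IsMinOn (fun x => f x + (1 / 2) * B x x - φ x) D p)
    (hq : q ∈ D) (hq_min : IsMinOn (fun x => f x + (1 / 2) * B x x - ψ x) D q) :
    B (p - q) (p - q) ≤ (φ - ψ) (p - q) := by
  have hp' := hB.le_add_apply_sub_of_isMinOn (hf.sub (φ.concaveOn hf.1)) hp
    (fun y hy => by simpa only [Pi.sub_apply, sub_add_eq_add_sub] using hp_min hy) hq
  have hq' := hB.le_add_apply_sub_of_isMinOn (hf.sub (ψ.concaveOn hf.1)) hq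
    (fun y hy => by simpa only [Pi.sub_apply, sub_add_eq_add_sub] using hq_min hy) hp
  simp only [Pi.sub_apply, map_sub, LinearMap.sub_apply] at hp' hq' ⊢
  linarith [hB.eq p q]

end LinearMap.BilinForm.IsSymm

theorem Matrix.PosDef.isSymm_toBilin' {ι : Type*} [Fintype ι] [DecidableEq ι] {H : Matrix ι ι ℝ}
    (hH : H.PosDef) : (Matrix.toBilin' H).IsSymm :=
  Matrix.isSymm_toBilin'_iff_isSymm.2 (isHermitian_iff_isSymm.1 hH.isHermitian)

theorem Matrix.PosDef.dotProduct_sq_le {ι : Type*} [Fintype ι] [DecidableEq ι]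
    {H : Matrix ι ι ℝ} (hH : H.PosDef) (w x : ι → ℝ) :
    (w ⬝ᵥ x) ^ 2 ≤ (x ⬝ᵥ H *ᵥ x) * (w ⬝ᵥ H⁻¹ *ᵥ w) := by
  set y := H⁻¹ *ᵥ w
  have hHy : H *ᵥ y = w := by
    rw [mulVec_mulVec, mul_nonsing_inv H (isUnit_iff_ne_zero.2 hH.det_pos.ne'), one_mulVec]
  have hcs := (Matrix.toBilin' H).apply_sq_le_of_symm
    (fun z => by simpa [toBilin'_apply'] using hH.posSemidef.dotProduct_mulVec_nonneg z)
    (LinearMap.BilinForm.isSymm_iff.1 hH.isSymm_toBilin') x y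
  simpa only [toBilin'_apply', hHy, dotProduct_comm x w, dotProduct_comm y w] using hcs

theorem stmt2_general {n : ℕ} (H : Matrix (Fin n) (Fin n) ℝ)
    (hpd : H.PosDef)
    (t : ℝ) (ht : 0 < t)
    (g : (Fin n → ℝ) → ℝ) (dg : Set (Fin n → ℝ))
    (hg_cvx : ConvexOn ℝ dg g)
    (u v p q : Fin n → ℝ)
    (hp_mem : p ∈ dg)
    (hp_min : ∀ y ∈ dg,
      t⁻¹ * g p + (1/2) * (p ⬝ᵥ H.mulVec p) - u ⬝ᵥ p ≤
        t⁻¹ * g y + (1/2) * (y ⬝ᵥ H.mulVec y) - u ⬝ᵥ y)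
    (hq_mem : q ∈ dg)
    (hq_min : ∀ y ∈ dg,
      t⁻¹ * g q + (1/2) * (q ⬝ᵥ H.mulVec q) - v ⬝ᵥ q ≤
        t⁻¹ * g y + (1/2) * (y ⬝ᵥ H.mulVec y) - v ⬝ᵥ y) :
    Real.sqrt ((p - q) ⬝ᵥ H.mulVec (p - q)) ≤
      Real.sqrt ((u - v) ⬝ᵥ H⁻¹.mulVec (u - v)) := by
  have hf : ConvexOn ℝ dg fun y => t⁻¹ * g y := hg_cvx.smul (inv_nonneg.2 ht.le)
  have hfirm : (p - q) ⬝ᵥ H *ᵥ (p - q) ≤ (u - v) ⬝ᵥ (p - q) := by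
    simpa only [toBilin'_apply', LinearMap.sub_apply, dotProductBilin_apply_apply, sub_dotProduct]
      using hpd.isSymm_toBilin'.apply_sub_sub_le_of_isMinOn hf
        (φ := dotProductBilin ℝ ℝ u) (ψ := dotProductBilin ℝ ℝ v)
        hp_mem (by simpa only [isMinOn_iff, toBilin'_apply', dotProductBilin_apply_apply])
        hq_mem (by simpa only [isMinOn_iff, toBilin'_apply', dotProductBilin_apply_apply])
  have hcs := hpd.dotProduct_sq_le (u - v) (p - q)
  have hH_nonneg : 0 ≤ (p - q) ⬝ᵥ H *ᵥ (p - q) := by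
    simpa using hpd.posSemidef.dotProduct_mulVec_nonneg (p - q)
  have hHinv_nonneg : 0 ≤ (u - v) ⬝ᵥ H⁻¹ *ᵥ (u - v) := by
    simpa using hpd.inv.posSemidef.dotProduct_mulVec_nonneg (u - v)
  apply Real.sqrt_le_sqrt
  nlinarith [mul_le_mul hfirm hfirm hH_nonneg (hH_nonneg.trans hfirm)]

/-- nonexpansiveness of the scaled proximal operator from the dual local norm
into the local norm: `‖p − q‖_H ≤ ‖u − v‖_H*`, i.e.
`((p−q)ᵀH(p−q))^(1/2) ≤ ((u−v)ᵀH⁻¹(u−v))^(1/2)`. -/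
theorem stmt2 {n : ℕ} (H : Matrix (Fin n) (Fin n) ℝ)
    (hsymm : H.IsSymm) (hpd : H.PosDef)
    (t : ℝ) (ht : 0 < t)
    (g : (Fin n → ℝ) → ℝ) (dg : Set (Fin n → ℝ))
    (hg_cvx : ConvexOn ℝ dg g) (hg_lsc : LowerSemicontinuousOn g dg)
    (hg_proper : dg.Nonempty)
    (u v p q : Fin n → ℝ)
    (hp_mem : p ∈ dg)
    (hp_min : ∀ y ∈ dg,
      t⁻¹ * g p + (1/2) * (p ⬝ᵥ H.mulVec p) - u ⬝ᵥ p ≤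
        t⁻¹ * g y + (1/2) * (y ⬝ᵥ H.mulVec y) - u ⬝ᵥ y)
    (hq_mem : q ∈ dg)
    (hq_min : ∀ y ∈ dg,
      t⁻¹ * g q + (1/2) * (q ⬝ᵥ H.mulVec q) - v ⬝ᵥ q ≤
        t⁻¹ * g y + (1/2) * (y ⬝ᵥ H.mulVec y) - v ⬝ᵥ y) :
    Real.sqrt ((p - q) ⬝ᵥ H.mulVec (p - q)) ≤
      Real.sqrt ((u - v) ⬝ᵥ H⁻¹.mulVec (u - v)) :=
  stmt2_general H hpd t ht g dg hg_cvx u v p q hp_mem hp_min hq_mem hq_min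
end

section
/- Let f : ℝⁿ → ℝ ∪ {+∞} be twice continuously differentiable on its open effective domain, g : ℝⁿ → ℝ ∪ {+∞} proper, lower semicontinuous and convex, and t > 0. Suppose x*_t ∈ dom f ∩ dom g minimizes F(x;t) := f(x) + t⁻¹g(x) over ℝⁿ and H := ∇²f(x*_t) is positive definite. Then x*_t is the unique minimizer over ℝⁿ of y ↦ t⁻¹g(y) + ½yᵀHy − (Hx*_t − ∇f(x*_t))ᵀy; that is, x*_t = P^g_{x*_t}(S_{x*_t}(x*_t); t), the fixed-point characterization of the minimizer. -/
/-!
Since `x*` minimizes `f + t⁻¹ g` and `f` is differentiable there while `g` is convex, the chord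
bound for `g` along `[x*, y]` yields the first-order inequality
`t⁻¹ (g x* - g y) ≤ ⟪∇f(x*), y - x*⟫`. The Hessian `H` is symmetric, so the quadratic model
`q(y) = t⁻¹ g y + ½⟪y, H y⟫ - ⟪H x* - ∇f(x*), y⟫` satisfies
`q(y) - q(x*) = t⁻¹ (g y - g x*) + ⟪∇f(x*), y - x*⟫ + ½⟪y - x*, H (y - x*)⟫`,
which is strictly positive for `y ≠ x*` by positive definiteness.
-/

open Filter Topology Set RealInnerProductSpace

theorem ConvexOn.sub_le_of_isLocalMinOn_add {E : Type*} [NormedAddCommGroup E] [NormedSpace ℝ E]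
    {f g : E → ℝ} {f' : E →L[ℝ] ℝ} {D : Set E} {x y : E} (hg : ConvexOn ℝ D g)
    (hx : x ∈ D) (hy : y ∈ D) (hf : HasFDerivAt f f' x) (hmin : IsLocalMinOn (f + g) D x) :
    g x - g y ≤ f' (y - x) := by
  set ψ : ℝ → ℝ := fun s => f (x + s • (y - x)) + s * (g y - g x)
  have hseg : ∀ s : ℝ, x + s • (y - x) = (1 - s) • x + s • y := fun s => by module
  have hline : HasDerivAt (fun s : ℝ => x + s • (y - x)) (y - x) 0 := by
    simpa using ((hasDerivAt_id (0 : ℝ)).smul_const (y - x)).const_add x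
  have hψ : HasDerivAt ψ (f' (y - x) + (g y - g x)) 0 := by
    have hf0 : HasFDerivAt f f' (x + (0 : ℝ) • (y - x)) := by simpa using hf
    exact (hf0.comp_hasDerivAt (0 : ℝ) hline).add (hasDerivAt_mul_const _)
  -- `g` lies below its chord on the segment, so `ψ` dominates `f + g` there up to a constant
  have hψmin : IsLocalMinOn ψ (Icc 0 1) 0 := by
    have hpath : Tendsto (fun s : ℝ => x + s • (y - x)) (𝓝[Icc 0 1] 0) (𝓝[D] x) := by
      refine tendsto_nhdsWithin_iff.2 ⟨?_, ?_⟩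
      · simpa using hline.continuousAt.tendsto.mono_left nhdsWithin_le_nhds
      · filter_upwards [self_mem_nhdsWithin] with s ⟨hs0, hs1⟩
        rw [hseg]
        exact hg.1 hx hy (by linarith) hs0 (by ring)
    filter_upwards [hpath.eventually hmin, self_mem_nhdsWithin] with s hs ⟨hs0, hs1⟩
    have hgs := hg.2 hx hy (by linarith : 0 ≤ 1 - s) hs0 (by ring)
    rw [← hseg, smul_eq_mul, smul_eq_mul] at hgs
    simp only [Pi.add_apply] at hs
    simp only [ψ, zero_smul, add_zero, zero_mul]
    nlinarith
  have h01 : segment ℝ (0 : ℝ) (0 + 1) ⊆ Icc 0 1 := by simp [segment_eq_Icc]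
  have hslope := hψmin.hasFDerivWithinAt_nonneg hψ.hasFDerivAt.hasFDerivWithinAt
    (mem_posTangentConeAt_of_segment_subset h01)
  simp only [ContinuousLinearMap.toSpanSingleton_apply, one_smul] at hslope
  linarith

theorem isSymmetric_of_hasFDerivAt_gradient {E : Type*} [NormedAddCommGroup E]
    [InnerProductSpace ℝ E] [CompleteSpace E] {f : E → ℝ} {x : E} {H : E →L[ℝ] E}
    (hf : ∀ᶠ z in 𝓝 x, DifferentiableAt ℝ f z) (hH : HasFDerivAt (gradient f) H x) :
    (H : E →ₗ[ℝ] E).IsSymmetric := by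
  let J := (InnerProductSpace.toDual ℝ E).toContinuousLinearEquiv.toContinuousLinearMap
  have hfderiv : ∀ᶠ z in 𝓝 x, HasFDerivAt f (J (gradient f z)) z :=
    hf.mono fun z hz => hz.hasGradientAt.hasFDerivAt
  intro v w
  simpa [J, InnerProductSpace.toDual_apply_apply, real_inner_comm] using
    second_derivative_symmetric_of_eventually hfderiv (J.hasFDerivAt.comp x hH) v w

theorem LinearMap.IsSymmetric.inner_map_sub_sub {E : Type*} [NormedAddCommGroup E]
    [InnerProductSpace ℝ E] {T : E →ₗ[ℝ] E} (hT : T.IsSymmetric) (x y : E) :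
    ⟪y - x, T (y - x)⟫ = ⟪y, T y⟫ - 2 * ⟪T x, y⟫ + ⟪x, T x⟫ := by
  simp only [map_sub, inner_sub_left, inner_sub_right, hT x y, real_inner_comm (T x) y]
  ring

theorem stmt3_general {n : ℕ} (f g : EuclideanSpace ℝ (Fin n) → ℝ)
    (df dg : Set (EuclideanSpace ℝ (Fin n)))
    (hdf_open : IsOpen df)
    (hf_smooth : ContDiffOn ℝ 2 f df)
    (hg_cvx : ConvexOn ℝ dg g)
    (t : ℝ) (ht : 0 < t)
    (xs : EuclideanSpace ℝ (Fin n)) (hxs : xs ∈ df ∩ dg)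
    (hmin : ∀ x ∈ df ∩ dg, f xs + t⁻¹ * g xs ≤ f x + t⁻¹ * g x)
    (H : EuclideanSpace ℝ (Fin n) →L[ℝ] EuclideanSpace ℝ (Fin n))
    (hH : HasFDerivAt (fun y => gradient f y) H xs)
    (hpd : ∀ u : EuclideanSpace ℝ (Fin n), u ≠ 0 → 0 < ⟪u, H u⟫) :
    xs ∈ dg ∧ ∀ y ∈ dg, y ≠ xs →
      t⁻¹ * g xs + (1/2) * ⟪xs, H xs⟫ - ⟪H xs - gradient f xs, xs⟫ <
        t⁻¹ * g y + (1/2) * ⟪y, H y⟫ - ⟪H xs - gradient f xs, y⟫ := by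
  have hdf_nhds : df ∈ 𝓝 xs := hdf_open.mem_nhds hxs.1
  have hdiff : ∀ᶠ z in 𝓝 xs, DifferentiableAt ℝ f z :=
    eventually_of_mem hdf_nhds fun z hz =>
      (hf_smooth.contDiffAt (hdf_open.mem_nhds hz)).differentiableAt (by norm_num)
  have hsymm := isSymmetric_of_hasFDerivAt_gradient hdiff hH
  have hlocmin : IsLocalMinOn (f + fun z => t⁻¹ * g z) dg xs := by
    have : IsLocalMinOn (f + fun z => t⁻¹ * g z) (df ∩ dg) xs := IsMinOn.localize hmin
    rwa [IsLocalMinOn, nhdsWithin_inter_of_mem (mem_nhdsWithin_of_mem_nhds hdf_nhds)] at this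
  refine ⟨hxs.2, fun y hy hne => ?_⟩
  have hfirst := (hg_cvx.smul (inv_nonneg.2 ht.le)).sub_le_of_isLocalMinOn_add hxs.2 hy
    hdiff.self_of_nhds.hasGradientAt.hasFDerivAt hlocmin
  have hcurv := hpd (y - xs) (sub_ne_zero.2 hne)
  rw [← ContinuousLinearMap.coe_coe H, hsymm.inner_map_sub_sub] at hcurv
  simp only [smul_eq_mul, InnerProductSpace.toDual_apply_apply, inner_sub_right] at hfirst
  simp only [ContinuousLinearMap.coe_coe, inner_sub_left, real_inner_comm (H xs) xs] at hcurv ⊢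
  linarith

/-- fixed-point characterization of the minimizer: if `x*_t ∈ dom f ∩ dom g`
minimizes `F(·;t) = f + t⁻¹ g` and `H = ∇²f(x*_t)` is positive definite, then `x*_t` is the
unique minimizer (over `ℝⁿ`, i.e. over `dom g`) of
`y ↦ t⁻¹ g(y) + ½ ⟪y, H y⟫ − ⟪H x*_t − ∇f(x*_t), y⟫`, that is,
`x*_t = P^g_{x*_t}(S_{x*_t}(x*_t); t)`. -/
theorem stmt3 {n : ℕ} (f g : EuclideanSpace ℝ (Fin n) → ℝ)
    (df dg : Set (EuclideanSpace ℝ (Fin n)))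
    (hdf_open : IsOpen df)
    (hf_smooth : ContDiffOn ℝ 2 f df)
    (hg_cvx : ConvexOn ℝ dg g) (hg_lsc : LowerSemicontinuousOn g dg)
    (hg_proper : dg.Nonempty)
    (t : ℝ) (ht : 0 < t)
    (xs : EuclideanSpace ℝ (Fin n)) (hxs : xs ∈ df ∩ dg)
    (hmin : ∀ x ∈ df ∩ dg, f xs + t⁻¹ * g xs ≤ f x + t⁻¹ * g x)
    (H : EuclideanSpace ℝ (Fin n) →L[ℝ] EuclideanSpace ℝ (Fin n))
    (hH : HasFDerivAt (fun y => gradient f y) H xs)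
    (hpd : ∀ u : EuclideanSpace ℝ (Fin n), u ≠ 0 → 0 < ⟪u, H u⟫) :
    xs ∈ dg ∧ ∀ y ∈ dg, y ≠ xs →
      t⁻¹ * g xs + (1/2) * ⟪xs, H xs⟫ - ⟪H xs - gradient f xs, xs⟫ <
        t⁻¹ * g y + (1/2) * ⟪y, H y⟫ - ⟪H xs - gradient f xs, y⟫ :=
  stmt3_general f g df dg hdf_open hf_smooth hg_cvx t ht xs hxs hmin H hH hpd
end

section
/- Let c > 0 and set C := 1.177c + 6.068. Let (λ_j)_{j≥0} be a sequence of nonnegative real numbers with λ₀ ≤ min{0.15, 1/C} and λ_{j+1} ≤ (c/(1 − λ_j) + 6.068)·λ_j² for all j ≥ 0. Then for all j ≥ 0: λ_j ≤ λ₀ and λ_{j+1} ≤ C·λ_j²; consequently C·λ_j ≤ (C·λ₀)^(2^j) for all j ≥ 0, i.e., the sequence (λ_j) converges to zero at a quadratic rate. -/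
/-!
While `λ_j ≤ 0.15` the factor `c / (1 - λ_j)` is at most `1.177 c`, so the recursion gives
`λ_{j+1} ≤ C λ_j²`, i.e. `C λ_{j+1} ≤ (C λ_j)²`. Since `C λ₀ ≤ 1`, induction keeps `C λ_j ≤ 1`,
hence `λ_{j+1} ≤ (C λ_j) λ_j ≤ λ_j ≤ λ₀ ≤ 0.15`, and squaring `2^j` times gives the rate.
-/

/-- The constant `1.177` is `1 / (1 - 0.15) ≈ 1.1765` rounded up. -/
lemma div_one_sub_le_mul_of_le {c x : ℝ} (hc : 0 ≤ c) (hx : x ≤ 0.15) :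
    c / (1 - x) ≤ 1.177 * c := by
  rw [div_le_iff₀ (by linarith)]
  nlinarith

lemma quadratic_convergence_of_le_mul_sq {C : ℝ} (hC : 0 ≤ C) {a : ℕ → ℝ}
    (ha : ∀ j, 0 ≤ a j) (hCa : C * a 0 ≤ 1)
    (hstep : ∀ j, a j ≤ a 0 → a (j + 1) ≤ C * a j ^ 2) :
    ∀ j, a j ≤ a 0 ∧ C * a j ≤ (C * a 0) ^ 2 ^ j := by
  intro j
  induction j with
  | zero => simp
  | succ j ih =>
    obtain ⟨hle, hrate⟩ := ih
    have hCaj : C * a j ≤ 1 := hrate.trans (pow_le_one₀ (mul_nonneg hC (ha 0)) hCa)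
    have hnext := hstep j hle
    constructor
    · calc a (j + 1) ≤ C * a j * a j := by rwa [mul_assoc, ← sq]
        _ ≤ 1 * a j := by gcongr; exact ha j
        _ ≤ a 0 := by rwa [one_mul]
    · calc C * a (j + 1) ≤ (C * a j) ^ 2 := by rw [mul_pow, sq C, mul_assoc]; gcongr
        _ ≤ ((C * a 0) ^ 2 ^ j) ^ 2 := by gcongr; exact mul_nonneg hC (ha j)
        _ = (C * a 0) ^ 2 ^ (j + 1) := by rw [← pow_mul, pow_succ]

/-- quadratic convergence of the inexact proximal-Newton iteration with
`δ_j ≤ c λ_j²`: with `C = 1.177c + 6.068`, if `λ₀ ≤ min{0.15, 1/C}` and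
`λ_{j+1} ≤ (c/(1 − λ_j) + 6.068)·λ_j²`, then for every `j`,
`λ_j ≤ λ₀`, `λ_{j+1} ≤ C·λ_j²`, and `C·λ_j ≤ (C·λ₀)^(2^j)`. -/
theorem stmt8 (c : ℝ) (hc : 0 < c) (lam : ℕ → ℝ) (hnn : ∀ j, 0 ≤ lam j)
    (h0 : lam 0 ≤ min 0.15 (1 / (1.177 * c + 6.068)))
    (hrec : ∀ j, lam (j + 1) ≤ (c / (1 - lam j) + 6.068) * (lam j) ^ 2) :
    ∀ j, lam j ≤ lam 0 ∧
      lam (j + 1) ≤ (1.177 * c + 6.068) * (lam j) ^ 2 ∧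
      (1.177 * c + 6.068) * lam j ≤ ((1.177 * c + 6.068) * lam 0) ^ (2 ^ j) := by
  have hC : (0 : ℝ) < 1.177 * c + 6.068 := by positivity
  obtain ⟨hsmall, hinv⟩ := le_min_iff.mp h0
  have hCa : (1.177 * c + 6.068) * lam 0 ≤ 1 := by
    rwa [le_div_iff₀ hC, mul_comm] at hinv
  have hstep : ∀ j, lam j ≤ lam 0 → lam (j + 1) ≤ (1.177 * c + 6.068) * lam j ^ 2 :=
    fun j hj => (hrec j).trans (by
      gcongr
      exact div_one_sub_le_mul_of_le hc.le (hj.trans hsmall))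
  intro j
  obtain ⟨hle, hrate⟩ := quadratic_convergence_of_le_mul_sq hC.le hnn hCa hstep j
  exact ⟨hle, hstep j hle, hrate⟩
end

section
/- Let β ∈ (0, 0.15] and let δ, Δ, λ⁺, μ, μ⁺ be nonnegative real numbers satisfying δ ≤ 0.075β, Δ ≤ (√β − 2.581β)/(2.581 + √β), λ⁺ ≤ β, μ ≤ (λ⁺ + Δ)/(1 − Δ), and μ⁺ ≤ 1.18δ + 6.07μ². Then μ ≤ √β/2.581 and μ⁺ ≤ β. -/
/-!
With `s = √β` and `c = 2.581`, the bound `(β + Δ)/(1 - Δ)` on `μ` is increasing in `Δ` and equals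
`s/c` exactly at `Δ = (s - cβ)/(c + s)`; hence `μ ≤ √β/2.581`. Then
`μ⁺ ≤ 1.18 · 0.075 β + 6.07 β / 2.581² ≈ 0.9997 β`.
-/

lemma le_div_of_le_add_div_one_sub {c s β lam Δ μ : ℝ} (hc : 0 < c) (hs : 0 ≤ s)
    (hβ : 0 ≤ β) (hΔ : Δ ≤ (s - c * β) / (c + s)) (hlam : lam ≤ β)
    (hμ : μ ≤ (lam + Δ) / (1 - Δ)) : μ ≤ s / c := by
  have hcs : 0 < c + s := by linarith
  have hΔ' : Δ * (c + s) ≤ s - c * β := (le_div_iff₀ hcs).mp hΔ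
  have hΔ1 : 0 < 1 - Δ := by nlinarith
  have hμ' : μ * (1 - Δ) ≤ lam + Δ := (le_div_iff₀ hΔ1).mp hμ
  rw [le_div_iff₀ hc]
  refine le_of_mul_le_mul_right ?_ hΔ1
  calc μ * c * (1 - Δ) = c * (μ * (1 - Δ)) := by ring
    _ ≤ c * (β + Δ) := by gcongr; linarith
    _ ≤ s * (1 - Δ) := by linarith

lemma le_mul_of_le_add_mul_sq {a b c d β δ μ μp : ℝ} (ha : 0 ≤ a) (hb : 0 ≤ b) (hβ : 0 ≤ β)
    (hδ : δ ≤ d * β) (hμ0 : 0 ≤ μ) (hμ : μ ≤ √β / c) (hμp : μp ≤ a * δ + b * μ ^ 2) :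
    μp ≤ (a * d + b / c ^ 2) * β := by
  have hμ2 : μ ^ 2 ≤ β / c ^ 2 := by
    calc μ ^ 2 ≤ (√β / c) ^ 2 := pow_le_pow_left₀ hμ0 hμ 2
      _ = β / c ^ 2 := by rw [div_pow, Real.sq_sqrt hβ]
  calc μp ≤ a * δ + b * μ ^ 2 := hμp
    _ ≤ a * (d * β) + b * (β / c ^ 2) := by gcongr
    _ = (a * d + b / c ^ 2) * β := by ring

theorem stmt10_general (β δ Δ lamp μ μp : ℝ)
    (hβ : β ∈ Set.Ioc (0 : ℝ) 0.15)
    (hμ0 : 0 ≤ μ)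
    (hδ : δ ≤ 0.075 * β)
    (hΔ : Δ ≤ (Real.sqrt β - 2.581 * β) / (2.581 + Real.sqrt β))
    (hlamp : lamp ≤ β)
    (hμ : μ ≤ (lamp + Δ) / (1 - Δ))
    (hμp : μp ≤ 1.18 * δ + 6.07 * μ ^ 2) :
    μ ≤ Real.sqrt β / 2.581 ∧ μp ≤ β := by
  have hβ0 : 0 ≤ β := hβ.1.le
  have hμle : μ ≤ Real.sqrt β / 2.581 :=
    le_div_of_le_add_div_one_sub (by norm_num) (Real.sqrt_nonneg β) hβ0 hΔ hlamp hμ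
  refine ⟨hμle, ?_⟩
  calc μp ≤ (1.18 * 0.075 + 6.07 / 2.581 ^ 2) * β :=
        le_mul_of_le_add_mul_sq (by norm_num) (by norm_num) hβ0 hδ hμ0 hμle hμp
    _ ≤ β := mul_le_of_le_one_left hβ0 (by norm_num)

/-- quantitative core of Theorem 4.1: for `β ∈ (0, 0.15]`, if
`δ ≤ 0.075β`, `Δ ≤ (√β − 2.581β)/(2.581 + √β)`, `λ⁺ ≤ β`, `μ ≤ (λ⁺ + Δ)/(1 − Δ)` and
`μ⁺ ≤ 1.18δ + 6.07μ²`, then `μ ≤ √β/2.581` and `μ⁺ ≤ β`. -/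
theorem stmt10 (β δ Δ lamp μ μp : ℝ)
    (hβ : β ∈ Set.Ioc (0 : ℝ) 0.15)
    (hδ0 : 0 ≤ δ) (hΔ0 : 0 ≤ Δ) (hlamp0 : 0 ≤ lamp) (hμ0 : 0 ≤ μ) (hμp0 : 0 ≤ μp)
    (hδ : δ ≤ 0.075 * β)
    (hΔ : Δ ≤ (Real.sqrt β - 2.581 * β) / (2.581 + Real.sqrt β))
    (hlamp : lamp ≤ β)
    (hμ : μ ≤ (lamp + Δ) / (1 - Δ))
    (hμp : μp ≤ 1.18 * δ + 6.07 * μ ^ 2) :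
    μ ≤ Real.sqrt β / 2.581 ∧ μp ≤ β :=
  stmt10_general β δ Δ lamp μ μp hβ hμ0 hδ hΔ hlamp hμ hμp
end

section
/- Let f : ℝⁿ → ℝ ∪ {+∞} be standard self-concordant on its open convex effective domain with ∇²f(x) positive definite for all x ∈ dom f, g : ℝⁿ → ℝ ∪ {+∞} proper, lower semicontinuous and convex, and t₀ > 0. Let x ∈ dom f ∩ dom g, let s̄ be the exact minimizer of the model F̂(·; t₀, x), and let s ∈ dom f ∩ dom g be a δ-solution of this subproblem for some δ ≥ 0. Set d := s − x and ζ := ‖d‖_x, and suppose δ < ζ. Then with the step size α := (ζ − δ)/((1 + ζ − δ)·ζ) ∈ (0, 1], the point x⁺ := x + α·d satisfies x⁺ ∈ dom f and F(x⁺; t₀) ≤ F(x; t₀) − ω(ζ − δ), where F(·;t₀) := f + t₀⁻¹g and ω(τ) := τ − ln(1+τ). -/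
/-!
The model `F̂(·; t₀, x)` is a convex function plus a quadratic with Hessian `∇²f(x)`, so its
minimizer `s̄` has quadratic growth `F̂(s̄) + ½‖y - s̄‖²_x ≤ F̂(y)`. Applied at `s` and at `x`,
together with the triangle inequality for `‖·‖_x`, this yields the model decrease
`⟪∇f(x), d⟫ + t₀⁻¹ (g(s) - g(x)) ≤ -ζ (ζ - δ)`.

Along the line `φ(τ) = f(x + τ d)`, self-concordance makes `φ''^(-1/2)` `1`-Lipschitz, hence
`φ''(τ) ≤ ζ² / (1 - τζ)²`; integrating twice gives
`f(x + τ d) ≤ f(x) + τ ⟪∇f(x), d⟫ - τζ - ln(1 - τζ)` for `τζ < 1`. With the chosen `α` one has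
`αζ (1 + ζ - δ) = ζ - δ`, and convexity of `g` on `[x, s]` combines the two bounds into the
decrease `ω(ζ - δ)`.
-/

open RealInnerProductSpace

open Set Filter Topology

section LocalNorm

variable {n : ℕ} {H : EuclideanSpace ℝ (Fin n) →L[ℝ] EuclideanSpace ℝ (Fin n)}

theorem locNorm_sq (hH : ∀ u, 0 ≤ ⟪u, H u⟫) (u : EuclideanSpace ℝ (Fin n)) :
    locNorm H u ^ 2 = ⟪u, H u⟫ :=
  Real.sq_sqrt (hH u)

theorem locNorm_neg (u : EuclideanSpace ℝ (Fin n)) : locNorm H (-u) = locNorm H u := by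
  simp [locNorm]

theorem locNorm_add_le (hH : ∀ u, 0 ≤ ⟪u, H u⟫) (u v : EuclideanSpace ℝ (Fin n)) :
    locNorm H (u + v) ≤ locNorm H u + locNorm H v := by
  set b := (⟪u, H v⟫ + ⟪v, H u⟫) / 2
  have hexpand : ∀ t : ℝ,
      ⟪u + t • v, H (u + t • v)⟫ = ⟪v, H v⟫ * (t * t) + 2 * b * t + ⟪u, H u⟫ := by
    intro t
    simp only [b, map_add, map_smul, inner_add_left, inner_add_right, real_inner_smul_left,
      real_inner_smul_right]
    ring
  have hdiscrim := discrim_le_zero fun t => (hexpand t) ▸ hH (u + t • v)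
  have hb : b ≤ locNorm H u * locNorm H v := by
    rw [locNorm, locNorm, ← Real.sqrt_mul (hH u)]
    refine (le_abs_self b).trans (Real.abs_le_sqrt ?_)
    rw [discrim] at hdiscrim
    linarith
  rw [locNorm, Real.sqrt_le_iff]
  refine ⟨add_nonneg (Real.sqrt_nonneg _) (Real.sqrt_nonneg _), ?_⟩
  have := hexpand 1
  simp only [one_smul, mul_one] at this
  rw [this, add_sq, locNorm_sq hH, locNorm_sq hH]
  linarith

theorem locNorm_sub_le (hH : ∀ u, 0 ≤ ⟪u, H u⟫) (u v : EuclideanSpace ℝ (Fin n)) :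
    locNorm H (u - v) ≤ locNorm H u + locNorm H v := by
  simpa only [sub_eq_add_neg, locNorm_neg] using locNorm_add_le hH u (-v)

end LocalNorm

theorem add_half_inner_le_of_isMinOn_quadratic_add_convex {E : Type*} [NormedAddCommGroup E]
    [InnerProductSpace ℝ E] {H : E →L[ℝ] E} (hH : ∀ u, 0 ≤ ⟪u, H u⟫) {D : Set E} {h : E → ℝ}
    (hh : ConvexOn ℝ D h) {F : E → ℝ} {a : ℝ} {v x₀ : E}
    (hF : ∀ y, F y = a + ⟪v, y - x₀⟫ + (1 / 2) * ⟪y - x₀, H (y - x₀)⟫ + h y)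
    {m : E} (hm : m ∈ D) (hmin : IsMinOn F D m) {y : E} (hy : y ∈ D) :
    F m + (1 / 2) * ⟪y - m, H (y - m)⟫ ≤ F y := by
  set u := y - m
  set L := ⟪v, u⟫ + (1 / 2) * ⟪m - x₀, H u⟫ + (1 / 2) * ⟪u, H (m - x₀)⟫
  set K := ⟪u, H u⟫
  have hexpand : ∀ t : ℝ,
      F (m + t • u) = F m - h m + h (m + t • u) + t * L + t ^ 2 * (K / 2) := by
    intro t
    rw [hF, hF, show m + t • u - x₀ = (m - x₀) + t • u by abel]
    simp only [L, K, map_add, map_smul, inner_add_left, inner_add_right, real_inner_smul_left,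
      real_inner_smul_right]
    ring
  have hsegment : ∀ t : ℝ, m + t • u = (1 - t) • m + t • y := fun t => by simp only [u]; module
  -- first-order optimality in the direction `u`, from minimality along the segment `[m, y]`
  have hslope : 0 ≤ L + h y - h m := by
    have hpos : ∀ t ∈ Ioc (0 : ℝ) 1, 0 ≤ L + h y - h m + t * (K / 2) := by
      rintro t ⟨ht0, ht1⟩
      have hmem : (1 - t) • m + t • y ∈ D := hh.1 hm hy (by linarith) ht0.le (by ring)
      have hconv : h ((1 - t) • m + t • y) ≤ (1 - t) * h m + t * h y :=
        hh.2 hm hy (by linarith) ht0.le (by ring)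
      have hle := isMinOn_iff.1 hmin _ hmem
      rw [← hsegment, hexpand] at hle
      rw [← hsegment] at hconv
      nlinarith
    have hlim : Tendsto (fun t : ℝ => L + h y - h m + t * (K / 2)) (𝓝[>] 0)
        (𝓝 (L + h y - h m)) := by
      have : Continuous fun t : ℝ => L + h y - h m + t * (K / 2) := by fun_prop
      simpa using this.continuousWithinAt.tendsto (x := 0) (s := Ioi 0)
    refine ge_of_tendsto hlim ?_
    filter_upwards [Ioc_mem_nhdsGT (zero_lt_one' ℝ)] with t ht using hpos t ht
  have hy1 := hexpand 1
  rw [one_smul, show m + u = y by simp only [u]; abel] at hy1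
  have hK : 0 ≤ K := hH u
  linarith

theorem le_sub_sq_add_of_isMinOn_of_deltaSolution {n : ℕ}
    {H : EuclideanSpace ℝ (Fin n) →L[ℝ] EuclideanSpace ℝ (Fin n)} (hH : ∀ u, 0 ≤ ⟪u, H u⟫)
    {D : Set (EuclideanSpace ℝ (Fin n))} {h : EuclideanSpace ℝ (Fin n) → ℝ}
    (hh : ConvexOn ℝ D h) {F : EuclideanSpace ℝ (Fin n) → ℝ} {a : ℝ}
    {v x₀ : EuclideanSpace ℝ (Fin n)}
    (hF : ∀ y, F y = a + ⟪v, y - x₀⟫ + (1 / 2) * ⟪y - x₀, H (y - x₀)⟫ + h y)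
    {m : EuclideanSpace ℝ (Fin n)} (hm : m ∈ D) (hmin : IsMinOn F D m) (hx₀ : x₀ ∈ D)
    {s : EuclideanSpace ℝ (Fin n)} (hs : s ∈ D) {δ : ℝ} (hδ : 0 ≤ δ)
    (hsδ : F s - F m ≤ δ ^ 2 / 2) (hδζ : δ ≤ locNorm H (s - x₀)) :
    F s ≤ F x₀ - (locNorm H (s - x₀) - δ) ^ 2 / 2 + δ ^ 2 / 2 := by
  have hstrong := fun y (hy : y ∈ D) =>
    add_half_inner_le_of_isMinOn_quadratic_add_convex hH hh hF hm hmin hy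
  have hsm : locNorm H (s - m) ≤ δ := by
    have := hstrong s hs
    rw [← Real.sqrt_sq hδ, locNorm]
    exact Real.sqrt_le_sqrt (by linarith)
  have htri : locNorm H (s - x₀) ≤ locNorm H (s - m) + locNorm H (x₀ - m) := by
    simpa using locNorm_sub_le hH (s - m) (x₀ - m)
  have hxm : (locNorm H (s - x₀) - δ) ^ 2 ≤ ⟪x₀ - m, H (x₀ - m)⟫ := by
    rw [← locNorm_sq hH]
    exact pow_le_pow_left₀ (by linarith) (by linarith) 2
  linarith [hstrong x₀ hx₀]

section Comparison

variable {a b : ℝ}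

theorem image_le_of_hasDerivAt_le {f f' g g' : ℝ → ℝ}
    (hf : ∀ τ ∈ Icc a b, HasDerivAt f (f' τ) τ) (hg : ∀ τ ∈ Icc a b, HasDerivAt g (g' τ) τ)
    (ha : f a ≤ g a) (hle : ∀ τ ∈ Icc a b, f' τ ≤ g' τ) : ∀ τ ∈ Icc a b, f τ ≤ g τ :=
  fun _ hτ => image_le_of_deriv_right_le_deriv_boundary
    (fun τ hτ => (hf τ hτ).continuousAt.continuousWithinAt)
    (fun τ hτ => (hf τ (Ico_subset_Icc_self hτ)).hasDerivWithinAt) ha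
    (fun τ hτ => (hg τ hτ).continuousAt.continuousWithinAt)
    (fun τ hτ => (hg τ (Ico_subset_Icc_self hτ)).hasDerivWithinAt)
    (fun τ hτ => hle τ (Ico_subset_Icc_self hτ)) hτ

theorem image_le_of_hasDerivAt_two_le {f f₁ f₂ g g₁ g₂ : ℝ → ℝ}
    (hf : ∀ τ ∈ Icc a b, HasDerivAt f (f₁ τ) τ) (hf₁ : ∀ τ ∈ Icc a b, HasDerivAt f₁ (f₂ τ) τ)
    (hg : ∀ τ ∈ Icc a b, HasDerivAt g (g₁ τ) τ) (hg₁ : ∀ τ ∈ Icc a b, HasDerivAt g₁ (g₂ τ) τ)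
    (ha : f a ≤ g a) (ha₁ : f₁ a ≤ g₁ a) (hle : ∀ τ ∈ Icc a b, f₂ τ ≤ g₂ τ) :
    ∀ τ ∈ Icc a b, f τ ≤ g τ :=
  image_le_of_hasDerivAt_le hf hg ha (image_le_of_hasDerivAt_le hf₁ hg₁ ha₁ hle)

end Comparison

theorem image_le_div_one_sub_mul_sqrt_sq_of_abs_deriv_le {u u' : ℝ → ℝ} {T : ℝ}
    (hu : ∀ τ ∈ Icc 0 T, HasDerivAt u (u' τ) τ) (hpos : ∀ τ ∈ Icc 0 T, 0 < u τ)
    (hsc : ∀ τ ∈ Icc 0 T, |u' τ| ≤ 2 * u τ ^ ((3 : ℝ) / 2)) (hT : T * √(u 0) < 1) :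
    ∀ τ ∈ Icc 0 T, u τ ≤ u 0 / (1 - τ * √(u 0)) ^ 2 := by
  intro τ hτ
  have h0 : (0 : ℝ) ∈ Icc 0 T := left_mem_Icc.2 (hτ.1.trans hτ.2)
  set ζ := √(u 0)
  have hζ : 0 < ζ := Real.sqrt_pos.2 (hpos 0 h0)
  -- `(u τ)^(-1/2)` has slope at least `-1`
  have hψ : ∀ t ∈ Icc 0 T, HasDerivAt (fun t => (√(u t))⁻¹)
      (-(u' t / (2 * √(u t))) / √(u t) ^ 2) t := fun t ht =>
    ((hu t ht).sqrt (hpos t ht).ne').inv (Real.sqrt_pos.2 (hpos t ht)).ne'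
  have hslope : ∀ t ∈ Icc 0 T, -1 ≤ -(u' t / (2 * √(u t))) / √(u t) ^ 2 := by
    intro t ht
    have hut := hpos t ht
    have hsqrt := Real.sqrt_pos.2 hut
    have h32 : u t ^ ((3 : ℝ) / 2) = √(u t) ^ 2 * √(u t) := by
      rw [show (3 : ℝ) / 2 = 1 + 1 / 2 by norm_num, Real.rpow_add hut, Real.rpow_one,
        ← Real.sqrt_eq_rpow, Real.sq_sqrt hut.le]
    have hu't := (abs_le.1 (hsc t ht)).2
    rw [h32] at hu't
    rw [neg_div, neg_le_neg_iff, div_div, div_le_one (by positivity)]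
    linarith
  have hψτ : ζ⁻¹ - τ ≤ (√(u τ))⁻¹ := by
    refine image_le_of_hasDerivAt_le (f' := fun _ => -1) (fun t _ => ?_) hψ
      (by simp [ζ]) hslope τ hτ
    simpa using (hasDerivAt_id t).const_sub ζ⁻¹
  have hgap : 0 < 1 - τ * ζ := by nlinarith [hτ.2]
  have hinv : ζ⁻¹ - τ = (1 - τ * ζ) / ζ := by field_simp
  rw [hinv] at hψτ
  have hsqrtτ : √(u τ) ≤ ζ / (1 - τ * ζ) := by
    simpa using inv_anti₀ (by positivity) hψτ
  calc u τ = √(u τ) ^ 2 := (Real.sq_sqrt (hpos τ hτ).le).symm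
    _ ≤ (ζ / (1 - τ * ζ)) ^ 2 := pow_le_pow_left₀ (Real.sqrt_nonneg _) hsqrtτ 2
    _ = u 0 / (1 - τ * ζ) ^ 2 := by rw [div_pow, Real.sq_sqrt (hpos 0 h0).le]

theorem image_le_add_mul_sub_log_of_abs_deriv_le {φ φ₁ φ₂ φ₃ : ℝ → ℝ} {T : ℝ}
    (hφ : ∀ τ ∈ Icc 0 T, HasDerivAt φ (φ₁ τ) τ) (hφ₁ : ∀ τ ∈ Icc 0 T, HasDerivAt φ₁ (φ₂ τ) τ)
    (hφ₂ : ∀ τ ∈ Icc 0 T, HasDerivAt φ₂ (φ₃ τ) τ) (hpos : ∀ τ ∈ Icc 0 T, 0 < φ₂ τ)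
    (hsc : ∀ τ ∈ Icc 0 T, |φ₃ τ| ≤ 2 * φ₂ τ ^ ((3 : ℝ) / 2)) (hT₀ : 0 ≤ T)
    (hT : T * √(φ₂ 0) < 1) :
    φ T ≤ φ 0 + T * φ₁ 0 - T * √(φ₂ 0) - Real.log (1 - T * √(φ₂ 0)) := by
  set ζ := √(φ₂ 0)
  have hζ : 0 ≤ ζ := Real.sqrt_nonneg _
  have hgap : ∀ τ ∈ Icc 0 T, 0 < 1 - τ * ζ := fun τ hτ => by nlinarith [hτ.2]
  have hlin : ∀ τ, HasDerivAt (fun t => 1 - t * ζ) (-ζ) τ := fun τ => by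
    simpa using ((hasDerivAt_id τ).mul_const ζ).const_sub 1
  -- the majorant `φ 0 + τ φ₁ 0 + ω_*(τ ζ)`, with `ω_*(t) = -t - log (1 - t)`
  refine image_le_of_hasDerivAt_two_le hφ hφ₁
    (g := fun τ => φ 0 + τ * φ₁ 0 - τ * ζ - Real.log (1 - τ * ζ))
    (g₁ := fun τ => φ₁ 0 - ζ + ζ * (1 - τ * ζ)⁻¹) (g₂ := fun τ => φ₂ 0 / (1 - τ * ζ) ^ 2)
    (fun τ hτ => ?_) (fun τ hτ => ?_) (by simp) (by simp)
    (image_le_div_one_sub_mul_sqrt_sq_of_abs_deriv_le hφ₂ hpos hsc hT) T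
    (right_mem_Icc.2 hT₀)
  · have h := ((((hasDerivAt_id τ).mul_const (φ₁ 0)).const_add (φ 0)).sub
      ((hasDerivAt_id τ).mul_const ζ)).sub ((hlin τ).log (hgap τ hτ).ne')
    refine h.congr_deriv ?_
    field_simp [(hgap τ hτ).ne']
    ring
  · have h := ((hlin τ).inv (hgap τ hτ).ne').const_mul ζ |>.const_add (φ₁ 0 - ζ)
    refine h.congr_deriv ?_
    have hζsq : ζ ^ 2 = φ₂ 0 := Real.sq_sqrt (hpos 0 (left_mem_Icc.2 hT₀)).le
    rw [← hζsq]
    field_simp [(hgap τ hτ).ne']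

theorem iteratedDeriv_two_eventuallyEq_of_hasDerivAt {φ φ₁ φ₂ : ℝ → ℝ} {U : Set ℝ}
    (hU : IsOpen U) (hφ : ∀ τ ∈ U, HasDerivAt φ (φ₁ τ) τ)
    (hφ₁ : ∀ τ ∈ U, HasDerivAt φ₁ (φ₂ τ) τ) {τ : ℝ} (hτ : τ ∈ U) :
    iteratedDeriv 2 φ =ᶠ[𝓝 τ] φ₂ := by
  filter_upwards [hU.mem_nhds hτ] with t ht
  have hderiv : deriv φ =ᶠ[𝓝 t] φ₁ := by
    filter_upwards [hU.mem_nhds ht] with r hr using (hφ r hr).deriv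
  rw [iteratedDeriv_succ, iteratedDeriv_one, hderiv.deriv_eq, (hφ₁ t ht).deriv]

theorem hasDerivAt_line {E : Type*} [NormedAddCommGroup E] [NormedSpace ℝ E] (x d : E) (τ : ℝ) :
    HasDerivAt (fun r : ℝ => x + r • d) d τ := by
  simpa using ((hasDerivAt_id τ).smul_const d).const_add x

section Line

variable {E : Type*} [NormedAddCommGroup E] [InnerProductSpace ℝ E] [CompleteSpace E]
  {f : E → ℝ} {x d : E} {τ : ℝ}

theorem hasDerivAt_comp_line (hf : DifferentiableAt ℝ f (x + τ • d)) :
    HasDerivAt (fun r : ℝ => f (x + r • d)) ⟪gradient f (x + τ • d), d⟫ τ := by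
  simpa [Function.comp_def] using
    (hasGradientAt_iff_hasFDerivAt.1 hf.hasGradientAt).comp_hasDerivAt τ (hasDerivAt_line x d τ)

theorem hasDerivAt_inner_gradient_comp_line {H : E →L[ℝ] E}
    (hH : HasFDerivAt (gradient f) H (x + τ • d)) :
    HasDerivAt (fun r : ℝ => ⟪gradient f (x + r • d), d⟫) ⟪d, H d⟫ τ := by
  simpa [real_inner_comm] using
    (hH.comp_hasDerivAt τ (hasDerivAt_line x d τ)).inner ℝ (hasDerivAt_const τ d)

theorem differentiableAt_inner_comp_line_of_hasFDerivAt_gradient {U : Set E} (hU : IsOpen U)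
    (hf : ContDiffOn ℝ 3 f U) {hess : E → E →L[ℝ] E}
    (hhess : ∀ y ∈ U, HasFDerivAt (gradient f) (hess y) y) (hτ : x + τ • d ∈ U) :
    DifferentiableAt ℝ (fun r : ℝ => ⟪d, hess (x + r • d) d⟫) τ := by
  have hgrad : ContDiffOn ℝ 2 (gradient f) U :=
    (InnerProductSpace.toDual ℝ E).symm.contDiff.comp_contDiffOn
      (hf.fderiv_of_isOpen hU (by norm_num))
  have hhessC1 : DifferentiableOn ℝ (fderiv ℝ (gradient f)) U :=
    (hgrad.fderiv_of_isOpen (m := 1) hU (by norm_num)).differentiableOn one_ne_zero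
  have hline : Continuous fun r : ℝ => x + r • d := by fun_prop
  have heq : (fun r : ℝ => ⟪d, fderiv ℝ (gradient f) (x + r • d) d⟫) =ᶠ[𝓝 τ]
      fun r => ⟪d, hess (x + r • d) d⟫ := by
    filter_upwards [(hU.preimage hline).mem_nhds hτ] with r hr
    rw [(hhess _ hr).fderiv]
  refine heq.differentiableAt_iff.1 ?_
  have h : DifferentiableAt ℝ (fun r : ℝ => fderiv ℝ (gradient f) (x + r • d)) τ :=
    (hhessC1.differentiableAt (hU.mem_nhds hτ)).comp τ (by fun_prop)
  exact (differentiableAt_const d).inner ℝ (h.clm_apply (differentiableAt_const d))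

end Line

theorem StandardSelfConcordantOn.le_add_inner_gradient_sub_log {n : ℕ}
    {f : EuclideanSpace ℝ (Fin n) → ℝ} {D : Set (EuclideanSpace ℝ (Fin n))}
    (hsc : StandardSelfConcordantOn f D) (hD : IsOpen D) (hf : ContDiffOn ℝ 3 f D)
    {hess : EuclideanSpace ℝ (Fin n) → EuclideanSpace ℝ (Fin n) →L[ℝ] EuclideanSpace ℝ (Fin n)}
    (hhess : ∀ y ∈ D, HasFDerivAt (gradient f) (hess y) y) {x d : EuclideanSpace ℝ (Fin n)}
    (hpos : ∀ y ∈ D, 0 < ⟪d, hess y d⟫) {T : ℝ} (hT₀ : 0 ≤ T)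
    (hseg : ∀ τ ∈ Icc 0 T, x + τ • d ∈ D) (hT : T * locNorm (hess x) d < 1) :
    f (x + T • d) ≤ f x + T * ⟪gradient f x, d⟫ - T * locNorm (hess x) d -
      Real.log (1 - T * locNorm (hess x) d) := by
  set U := (fun r : ℝ => x + r • d) ⁻¹' D
  have hU : IsOpen U := hD.preimage (by fun_prop)
  set φ := fun r : ℝ => f (x + r • d)
  set φ₂ := fun r : ℝ => ⟪d, hess (x + r • d) d⟫
  have hφ : ∀ τ ∈ U, HasDerivAt φ ⟪gradient f (x + τ • d), d⟫ τ := fun τ hτ =>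
    hasDerivAt_comp_line ((hf.differentiableOn (by norm_num)).differentiableAt (hD.mem_nhds hτ))
  have hφ₁ : ∀ τ ∈ U, HasDerivAt (fun r => ⟪gradient f (x + r • d), d⟫) (φ₂ τ) τ :=
    fun τ hτ => hasDerivAt_inner_gradient_comp_line (hhess _ hτ)
  have hφ₂ : ∀ τ ∈ U, HasDerivAt φ₂ (iteratedDeriv 3 φ τ) τ := by
    intro τ hτ
    rw [iteratedDeriv_succ, (iteratedDeriv_two_eventuallyEq_of_hasDerivAt hU hφ hφ₁ hτ).deriv_eq]
    exact (differentiableAt_inner_comp_line_of_hasFDerivAt_gradient hD hf hhess hτ).hasDerivAt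
  have hsc' : ∀ τ ∈ U, |iteratedDeriv 3 φ τ| ≤ 2 * φ₂ τ ^ ((3 : ℝ) / 2) := fun τ hτ => by
    rw [← (iteratedDeriv_two_eventuallyEq_of_hasDerivAt hU hφ hφ₁ hτ).eq_of_nhds]
    exact hsc x (by simpa using hseg 0 (left_mem_Icc.2 hT₀)) d τ hτ
  have hline := image_le_add_mul_sub_log_of_abs_deriv_le (fun τ hτ => hφ τ (hseg τ hτ))
    (fun τ hτ => hφ₁ τ (hseg τ hτ)) (fun τ hτ => hφ₂ τ (hseg τ hτ))
    (fun τ hτ => hpos _ (hseg τ hτ)) (fun τ hτ => hsc' τ (hseg τ hτ)) hT₀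
  simpa [φ, φ₂, locNorm] using hline (by simpa [φ₂, locNorm] using hT)

theorem dampedStep_pos_le_one {δ ζ α : ℝ} (hδ : 0 ≤ δ) (hδζ : δ < ζ)
    (hα : α = (ζ - δ) / ((1 + ζ - δ) * ζ)) :
    0 < α ∧ α ≤ 1 ∧ α * ζ * (1 + (ζ - δ)) = ζ - δ := by
  have hζ : 0 < ζ := hδ.trans_lt hδζ
  have hc : 0 < ζ - δ := sub_pos.2 hδζ
  rw [show (1 + ζ - δ) * ζ = (1 + (ζ - δ)) * ζ by ring] at hα
  subst hα
  refine ⟨by positivity, ?_, by field_simp⟩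
  rw [div_le_one (by positivity)]
  nlinarith

theorem stmt12_general {n : ℕ} (f g : EuclideanSpace ℝ (Fin n) → ℝ)
    (df dg : Set (EuclideanSpace ℝ (Fin n)))
    (hdf_open : IsOpen df) (hdf_conv : Convex ℝ df)
    (hf_smooth : ContDiffOn ℝ 3 f df)
    (hf_sc : StandardSelfConcordantOn f df)
    (hess : EuclideanSpace ℝ (Fin n) →
      EuclideanSpace ℝ (Fin n) →L[ℝ] EuclideanSpace ℝ (Fin n))
    (hhess : ∀ x ∈ df, HasFDerivAt (fun y => gradient f y) (hess x) x)
    (hpd : ∀ x ∈ df, ∀ u : EuclideanSpace ℝ (Fin n), u ≠ 0 → 0 < ⟪u, hess x u⟫)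
    (hg_cvx : ConvexOn ℝ dg g)
    (t0 : ℝ) (ht0 : 0 < t0)
    (x : EuclideanSpace ℝ (Fin n)) (hx : x ∈ df ∩ dg)
    -- the composite quadratic model `F̂(·; t₀, x)` around `x`
    (Fhat : EuclideanSpace ℝ (Fin n) → ℝ)
    (hFhat : ∀ y, Fhat y = f x + ⟪gradient f x, y - x⟫ +
      (1/2) * ⟪y - x, hess x (y - x)⟫ + t0⁻¹ * g y)
    -- `s̄` is the exact minimizer of the model
    (sbar : EuclideanSpace ℝ (Fin n)) (hsbar_mem : sbar ∈ dg)
    (hsbar_min : ∀ y ∈ dg, Fhat sbar ≤ Fhat y)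
    -- `s` is a `δ`-solution of the subproblem
    (δ : ℝ) (hδ : 0 ≤ δ)
    (s : EuclideanSpace ℝ (Fin n)) (hs : s ∈ df ∩ dg)
    (hs_δ : Fhat s - Fhat sbar ≤ δ ^ 2 / 2)
    (d : EuclideanSpace ℝ (Fin n)) (hd : d = s - x)
    (ζ : ℝ) (hζ : ζ = locNorm (hess x) d)
    (hδζ : δ < ζ)
    (α : ℝ) (hα : α = (ζ - δ) / ((1 + ζ - δ) * ζ)) :
    0 < α ∧ α ≤ 1 ∧ x + α • d ∈ df ∧ x + α • d ∈ dg ∧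
      f (x + α • d) + t0⁻¹ * g (x + α • d) ≤
        f x + t0⁻¹ * g x - ((ζ - δ) - Real.log (1 + (ζ - δ))) := by
  obtain ⟨hxdf, hxdg⟩ := hx
  obtain ⟨hsdf, hsdg⟩ := hs
  subst hd
  obtain ⟨hα₀, hα₁, hαζ⟩ := dampedStep_pos_le_one hδ hδζ hα
  have hpsd : ∀ u, 0 ≤ ⟪u, hess x u⟫ := fun u => by
    rcases eq_or_ne u 0 with rfl | hu
    · simp
    · exact (hpd x hxdf u hu).le
  have hd₀ : s - x ≠ 0 := fun h => by simp [hζ, h, locNorm] at hδζ; linarith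
  have hsegment : ∀ τ : ℝ, x + τ • (s - x) = (1 - τ) • x + τ • s := fun τ => by module
  refine ⟨hα₀, hα₁, hdf_conv.add_smul_sub_mem hxdf hsdf ⟨hα₀.le, hα₁⟩,
    hsegment α ▸ hg_cvx.1 hxdg hsdg (by linarith) hα₀.le (by ring), ?_⟩
  have hmodel := le_sub_sq_add_of_isMinOn_of_deltaSolution hpsd
    (hg_cvx.smul (inv_nonneg.2 ht0.le)) hFhat hsbar_mem (isMinOn_iff.2 hsbar_min) hxdg hsdg hδ
    hs_δ (hζ ▸ hδζ.le)
  rw [hFhat s, hFhat x, ← locNorm_sq hpsd, ← hζ] at hmodel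
  simp only [sub_self, inner_zero_right, map_zero, mul_zero, add_zero] at hmodel
  have hf_step := hf_sc.le_add_inner_gradient_sub_log hdf_open hf_smooth hhess
    (fun y hy => hpd y hy _ hd₀) hα₀.le
    (fun τ hτ => hdf_conv.add_smul_sub_mem hxdf hsdf ⟨hτ.1, hτ.2.trans hα₁⟩)
    (by rw [← hζ]; nlinarith)
  have hlog : 1 - α * ζ = (1 + (ζ - δ))⁻¹ :=
    eq_inv_of_mul_eq_one_left (by linear_combination -hαζ)
  rw [← hζ, hlog, Real.log_inv] at hf_step
  have hg_step : g (x + α • (s - x)) ≤ (1 - α) * g x + α * g s :=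
    hsegment α ▸ hg_cvx.2 hxdg hsdg (by linarith) hα₀.le (by ring)
  have ht₀ : 0 ≤ t0⁻¹ := inv_nonneg.2 ht0.le
  nlinarith [mul_le_mul_of_nonneg_left hg_step ht₀, mul_le_mul_of_nonneg_left hmodel hα₀.le]

/-- Lemma 4.3, inexact damped proximal-Newton step: with `d = s − x`,
`ζ = ‖d‖_x`, `δ < ζ` and step size `α = (ζ − δ)/((1 + ζ − δ)ζ) ∈ (0,1]`, the point
`x⁺ = x + α d` lies in `dom f` and `F(x⁺; t₀) ≤ F(x; t₀) − ω(ζ − δ)`. -/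
theorem stmt12 {n : ℕ} (f g : EuclideanSpace ℝ (Fin n) → ℝ)
    (df dg : Set (EuclideanSpace ℝ (Fin n)))
    (hdf_open : IsOpen df) (hdf_conv : Convex ℝ df)
    (hf_smooth : ContDiffOn ℝ 3 f df)
    (hf_sc : StandardSelfConcordantOn f df)
    (hess : EuclideanSpace ℝ (Fin n) →
      EuclideanSpace ℝ (Fin n) →L[ℝ] EuclideanSpace ℝ (Fin n))
    (hhess : ∀ x ∈ df, HasFDerivAt (fun y => gradient f y) (hess x) x)
    (hpd : ∀ x ∈ df, ∀ u : EuclideanSpace ℝ (Fin n), u ≠ 0 → 0 < ⟪u, hess x u⟫)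
    (hg_cvx : ConvexOn ℝ dg g) (hg_lsc : LowerSemicontinuousOn g dg)
    (hg_proper : dg.Nonempty)
    (t0 : ℝ) (ht0 : 0 < t0)
    (x : EuclideanSpace ℝ (Fin n)) (hx : x ∈ df ∩ dg)
    -- the composite quadratic model `F̂(·; t₀, x)` around `x`
    (Fhat : EuclideanSpace ℝ (Fin n) → ℝ)
    (hFhat : ∀ y, Fhat y = f x + ⟪gradient f x, y - x⟫ +
      (1/2) * ⟪y - x, hess x (y - x)⟫ + t0⁻¹ * g y)
    -- `s̄` is the exact minimizer of the model
    (sbar : EuclideanSpace ℝ (Fin n)) (hsbar_mem : sbar ∈ dg)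
    (hsbar_min : ∀ y ∈ dg, Fhat sbar ≤ Fhat y)
    -- `s` is a `δ`-solution of the subproblem
    (δ : ℝ) (hδ : 0 ≤ δ)
    (s : EuclideanSpace ℝ (Fin n)) (hs : s ∈ df ∩ dg)
    (hs_δ : Fhat s - Fhat sbar ≤ δ ^ 2 / 2)
    (d : EuclideanSpace ℝ (Fin n)) (hd : d = s - x)
    (ζ : ℝ) (hζ : ζ = locNorm (hess x) d)
    (hδζ : δ < ζ)
    (α : ℝ) (hα : α = (ζ - δ) / ((1 + ζ - δ) * ζ)) :
    0 < α ∧ α ≤ 1 ∧ x + α • d ∈ df ∧ x + α • d ∈ dg ∧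
      f (x + α • d) + t0⁻¹ * g (x + α • d) ≤
        f x + t0⁻¹ * g x - ((ζ - δ) - Real.log (1 + (ζ - δ))) :=
  stmt12_general f g df dg hdf_open hdf_conv hf_smooth hf_sc hess hhess hpd hg_cvx t0 ht0 x hx Fhat
    hFhat sbar hsbar_mem hsbar_min δ hδ s hs hs_δ d hd ζ hζ hδζ α hα
end

section
/- Let f : ℝⁿ → ℝ ∪ {+∞} be convex and differentiable on its open convex effective domain dom f, and suppose the barrier property ∇f(x)ᵀ(y − x) ≤ ν holds for all x ∈ dom f and all y ∈ Ω, where Ω := closure(dom f) and ν > 0. Let g : ℝⁿ → ℝ ∪ {+∞} be proper, lower semicontinuous and convex, let t > 0, and let x*_t ∈ dom f ∩ dom g minimize f + t⁻¹g over ℝⁿ with the first-order optimality condition −t·∇f(x*_t) ∈ ∂g(x*_t). Let x* ∈ Ω with g(x*) finite be a minimizer of g over Ω. Then 0 ≤ g(x*_t) − g(x*) ≤ t·ν. -/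
open RealInnerProductSpace

theorem sub_le_mul_of_neg_smul_subgradient {E : Type*} [NormedAddCommGroup E]
    [InnerProductSpace ℝ E] {g : E → ℝ} {u x y : E} {t ν : ℝ} (ht : 0 ≤ t)
    (hsub : g x + ⟪(-t) • u, y - x⟫ ≤ g y) (hu : ⟪u, y - x⟫ ≤ ν) :
    g x - g y ≤ t * ν := by
  rw [real_inner_smul_left] at hsub
  calc g x - g y ≤ t * ⟪u, y - x⟫ := by linarith
    _ ≤ t * ν := mul_le_mul_of_nonneg_left hu ht

theorem stmt16_general {n : ℕ} (ν : ℝ)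
    (f g : EuclideanSpace ℝ (Fin n) → ℝ)
    (df dg : Set (EuclideanSpace ℝ (Fin n)))
    (hbarrier : ∀ x ∈ df, ∀ y ∈ closure df, ⟪gradient f x, y - x⟫ ≤ ν)
    (t : ℝ) (ht : 0 < t)
    (xst : EuclideanSpace ℝ (Fin n)) (hxst : xst ∈ df ∩ dg)
    -- first-order optimality: `−t∇f(x*_t) ∈ ∂g(x*_t)`
    (hsubgrad : ∀ y ∈ dg, g xst + ⟪(-t) • gradient f xst, y - xst⟫ ≤ g y)
    -- `x* ∈ Ω` with `g(x*)` finite minimizes `g` over `Ω`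
    (xs : EuclideanSpace ℝ (Fin n)) (hxs_mem : xs ∈ closure df) (hxs_dg : xs ∈ dg)
    (hgs_min : ∀ y ∈ closure df ∩ dg, g xs ≤ g y) :
    0 ≤ g xst - g xs ∧ g xst - g xs ≤ t * ν :=
  ⟨sub_nonneg.mpr (hgs_min xst ⟨subset_closure hxst.1, hxst.2⟩),
    sub_le_mul_of_neg_smul_subgradient ht.le (hsubgrad xs hxs_dg)
      (hbarrier xst hxst.1 xs hxs_mem)⟩

/-- Lemma 5.1, estimate (5.2): let `f` be convex and differentiable on its
open convex effective domain with the barrier property `⟪∇f(x), y − x⟫ ≤ ν` for all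
`x ∈ dom f`, `y ∈ Ω := closure (dom f)`, let `x*_t ∈ dom f ∩ dom g` minimize `f + t⁻¹ g`
with the first-order condition `−t∇f(x*_t) ∈ ∂g(x*_t)`, and let `x*` minimize `g` over `Ω`.
Then `0 ≤ g(x*_t) − g(x*) ≤ t·ν`. -/
theorem stmt16 {n : ℕ} (ν : ℝ) (hν : 0 < ν)
    (f g : EuclideanSpace ℝ (Fin n) → ℝ)
    (df dg : Set (EuclideanSpace ℝ (Fin n)))
    (hdf_open : IsOpen df) (hdf_conv : Convex ℝ df)
    (hf_cvx : ConvexOn ℝ df f)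
    (hf_diff : ∀ x ∈ df, DifferentiableAt ℝ f x)
    (hbarrier : ∀ x ∈ df, ∀ y ∈ closure df, ⟪gradient f x, y - x⟫ ≤ ν)
    (hg_cvx : ConvexOn ℝ dg g) (hg_lsc : LowerSemicontinuousOn g dg)
    (hg_proper : dg.Nonempty)
    (t : ℝ) (ht : 0 < t)
    -- `x*_t` minimizes `f + t⁻¹ g` over `ℝⁿ`
    (xst : EuclideanSpace ℝ (Fin n)) (hxst : xst ∈ df ∩ dg)
    (hmin : ∀ x ∈ df ∩ dg, f xst + t⁻¹ * g xst ≤ f x + t⁻¹ * g x)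
    -- first-order optimality: `−t∇f(x*_t) ∈ ∂g(x*_t)`
    (hsubgrad : ∀ y ∈ dg, g xst + ⟪(-t) • gradient f xst, y - xst⟫ ≤ g y)
    -- `x* ∈ Ω` with `g(x*)` finite minimizes `g` over `Ω`
    (xs : EuclideanSpace ℝ (Fin n)) (hxs_mem : xs ∈ closure df) (hxs_dg : xs ∈ dg)
    (hgs_min : ∀ y ∈ closure df ∩ dg, g xs ≤ g y) :
    0 ≤ g xst - g xs ∧ g xst - g xs ≤ t * ν :=
  stmt16_general ν f g df dg hbarrier t ht xst hxst hsubgrad xs hxs_mem hxs_dg hgs_min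
end
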